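/- arXiv:0709.1205 — 3 statements merged into one kernel-verified Lean document; each statement's English description precedes it below -/
import Mathlib

section
/- For every SKS proof of a formula α (a derivation from t to α), there exists a cut-free SKS proof of α, i.e. an SKS proof of α containing no instance of the rule ai↑. -/
set_option linter.unusedVariables false

namespace AF

/-! ### Formulae of system SKS.

Atoms are pairs `(n, b)`; the involution `ā` flips the Boolean, so it is
fixed-point free. -/

inductive Formula : Type
  | tt : Formula
  | ff : Formula
  | atom : ℕ → Bool → Formula
  | or : Formula → Formula → Formula
  | and : Formula → Formula → Formula
  deriving DecidableEq

namespace Formula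

/-- Subformula at a position (`false` = left child, `true` = right child). -/
def sub : Formula → List Bool → Option Formula
  | φ, [] => some φ
  | .or α _, false :: p => sub α p
  | .or _ β, true :: p => sub β p
  | .and α _, false :: p => sub α p
  | .and _ β, true :: p => sub β p
  | _, _ :: _ => none

/-- Replace the subformula at a position. -/
def repl : Formula → List Bool → Formula → Formula
  | _, [], ψ => ψ
  | .or α β, false :: p, ψ => .or (repl α p ψ) β
  | .or α β, true :: p, ψ => .or α (repl β p ψ)
  | .and α β, false :: p, ψ => .and (repl α p ψ) β
  | .and α β, true :: p, ψ => .and α (repl β p ψ)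
  | φ, _ :: _, _ => φ

/-- `p` is an atom occurrence of `φ`. -/
def IsOcc (φ : Formula) (p : List Bool) : Prop :=
  ∃ n b, φ.sub p = some (.atom n b)

end Formula

/-! ### Inference rules.

The rule `=` of SKS replaces a formula by an equivalent one under
commutativity, associativity and the unit equations; each single instance of
`=` applies one equation (in either direction), so we list the equations as
individual rule names, all marked as being instances of `=` via `isEq`. -/

inductive RuleName : Type
  | aiDown | aiUp | awDown | awUp | acDown | acUp
  | s | m
  | eqOrComm | eqAndComm
  | eqOrAssocL | eqOrAssocR | eqAndAssocL | eqAndAssocR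
  | eqOrUnitDel | eqOrUnitAdd | eqAndUnitDel | eqAndUnitAdd
  | eqTTDel | eqTTAdd | eqFFDel | eqFFAdd
  deriving DecidableEq

namespace RuleName

/-- The atomic structural rules. -/
def isStructural : RuleName → Bool
  | .aiDown | .aiUp | .awDown | .awUp | .acDown | .acUp => true
  | _ => false

/-- The rule names that are instances of the rule `=`. -/
def isEq : RuleName → Bool
  | .aiDown | .aiUp | .awDown | .awUp | .acDown | .acUp | .s | .m => false
  | _ => true

end RuleName

/-- Rule instances (redex ⟹ contractum). -/
inductive RuleInstance : RuleName → Formula → Formula → Prop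
  | aiDown (n : ℕ) (b : Bool) :
      RuleInstance .aiDown .tt (.or (.atom n b) (.atom n (!b)))
  | aiUp (n : ℕ) (b : Bool) :
      RuleInstance .aiUp (.and (.atom n b) (.atom n (!b))) .ff
  | awDown (n : ℕ) (b : Bool) : RuleInstance .awDown .ff (.atom n b)
  | awUp (n : ℕ) (b : Bool) : RuleInstance .awUp (.atom n b) .tt
  | acDown (n : ℕ) (b : Bool) :
      RuleInstance .acDown (.or (.atom n b) (.atom n b)) (.atom n b)
  | acUp (n : ℕ) (b : Bool) :
      RuleInstance .acUp (.atom n b) (.and (.atom n b) (.atom n b))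
  | s (α β γ : Formula) :
      RuleInstance .s (.and α (.or β γ)) (.or (.and α β) γ)
  | m (α β γ δ : Formula) :
      RuleInstance .m (.or (.and α β) (.and γ δ)) (.and (.or α γ) (.or β δ))
  | eqOrComm (α β : Formula) : RuleInstance .eqOrComm (.or α β) (.or β α)
  | eqAndComm (α β : Formula) : RuleInstance .eqAndComm (.and α β) (.and β α)
  | eqOrAssocL (α β γ : Formula) :
      RuleInstance .eqOrAssocL (.or (.or α β) γ) (.or α (.or β γ))
  | eqOrAssocR (α β γ : Formula) :
      RuleInstance .eqOrAssocR (.or α (.or β γ)) (.or (.or α β) γ)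
  | eqAndAssocL (α β γ : Formula) :
      RuleInstance .eqAndAssocL (.and (.and α β) γ) (.and α (.and β γ))
  | eqAndAssocR (α β γ : Formula) :
      RuleInstance .eqAndAssocR (.and α (.and β γ)) (.and (.and α β) γ)
  | eqOrUnitDel (α : Formula) : RuleInstance .eqOrUnitDel (.or α .ff) α
  | eqOrUnitAdd (α : Formula) : RuleInstance .eqOrUnitAdd α (.or α .ff)
  | eqAndUnitDel (α : Formula) : RuleInstance .eqAndUnitDel (.and α .tt) α
  | eqAndUnitAdd (α : Formula) : RuleInstance .eqAndUnitAdd α (.and α .tt)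
  | eqTTDel : RuleInstance .eqTTDel (.or .tt .tt) .tt
  | eqTTAdd : RuleInstance .eqTTAdd .tt (.or .tt .tt)
  | eqFFDel : RuleInstance .eqFFDel (.and .ff .ff) .ff
  | eqFFAdd : RuleInstance .eqFFAdd .ff (.and .ff .ff)

/-- One (deep) inference step applying rule `r` at position `q`. -/
def StepAt (r : RuleName) (q : List Bool) (φ ψ : Formula) : Prop :=
  ∃ γ δ, φ.sub q = some γ ∧ RuleInstance r γ δ ∧ ψ = φ.repl q δ

/-- One inference step using a rule from the set `S`. -/
def Step (S : Set RuleName) (φ ψ : Formula) : Prop :=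
  ∃ r ∈ S, ∃ q, StepAt r q φ ψ

/-- There is a derivation from `φ` to `ψ` using only rules from `S`. -/
def Derives (S : Set RuleName) : Formula → Formula → Prop :=
  Relation.ReflTransGen (Step S)

/-! ### Derivations as explicit data (for the theory of atomic flows). -/

/-- A derivation: a premiss and a chain of steps, each recorded by its rule
name, the position of the redex, and the resulting formula. -/
structure Deriv : Type where
  prem : Formula
  steps : List (RuleName × List Bool × Formula)

namespace Deriv

/-- The `i`-th step datum. -/
def stepAt (Φ : Deriv) (i : ℕ) : RuleName × List Bool × Formula :=
  Φ.steps.getD i (RuleName.s, ([] : List Bool), Formula.tt)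

/-- The `i`-th formula of the derivation (`0` is the premiss). -/
def fml (Φ : Deriv) (i : ℕ) : Formula :=
  (Φ.prem :: Φ.steps.map (fun t => t.2.2)).getD i Φ.prem

/-- Number of formulae in the derivation. -/
def nf (Φ : Deriv) : ℕ := Φ.steps.length + 1

/-- The conclusion of the derivation. -/
def concl (Φ : Deriv) : Formula := Φ.fml Φ.steps.length

/-- The derivation is well formed: every recorded step is a correct
inference step of SKS. -/
def WF (Φ : Deriv) : Prop :=
  ∀ i, i < Φ.steps.length →
    StepAt (Φ.stepAt i).1 (Φ.stepAt i).2.1 (Φ.fml i) (Φ.fml (i + 1))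

end Deriv

/-! ### Atomic flows. -/

inductive FlowLabel : Type
  | aiDown | aiUp | awDown | awUp | acDown | acUp
  deriving DecidableEq

/-- Required (number of lower edges, number of upper edges) of a vertex. -/
def labDeg : FlowLabel → ℕ × ℕ
  | .aiDown => (2, 0)
  | .aiUp => (0, 2)
  | .awDown => (1, 0)
  | .awUp => (0, 1)
  | .acDown => (1, 2)
  | .acUp => (2, 1)

/-- The data of an atomic flow: vertices, edges, labels, and the two
endpoint maps.  `up e = none` means the upper endpoint is `⊤`, and
`lo e = none` means the lower endpoint is `⊥`. -/
structure PreFlow : Type where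
  V : Finset ℕ
  E : Finset ℕ
  η : ℕ → FlowLabel
  up : ℕ → Option ℕ
  lo : ℕ → Option ℕ

namespace PreFlow

/-- Lower edges of a vertex. -/
def Ledges (F : PreFlow) (v : ℕ) : Finset ℕ :=
  F.E.filter (fun e => F.up e = some v)

/-- Upper edges of a vertex. -/
def Uedges (F : PreFlow) (v : ℕ) : Finset ℕ :=
  F.E.filter (fun e => F.lo e = some v)

/-- All edges of a vertex. -/
def edges (F : PreFlow) (v : ℕ) : Finset ℕ := F.Ledges v ∪ F.Uedges v

def degOK (F : PreFlow) : Prop :=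
  ∀ v ∈ F.V, (F.Ledges v).card = (labDeg (F.η v)).1 ∧
    (F.Uedges v).card = (labDeg (F.η v)).2

def endpointsOK (F : PreFlow) : Prop :=
  ∀ e ∈ F.E, (∀ v, F.up e = some v → v ∈ F.V) ∧
    (∀ v, F.lo e = some v → v ∈ F.V)

/-- No cyclic sequence of edges `ε₁, …, ε_h` with
`up (ε_i) = lo (ε_(i+1 mod h))`. -/
def Acyclic (F : PreFlow) : Prop :=
  ¬ ∃ (h : ℕ) (ε : Fin (h + 1) → ℕ), (∀ i, ε i ∈ F.E) ∧
      ∀ i : Fin (h + 1), (F.up (ε i)).isSome ∧ F.up (ε i) = F.lo (ε (i + 1))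

/-- `π` is a polarity assignment (`false` = `−`, `true` = `+`). -/
def PolarityOK (F : PreFlow) (π : ℕ → Bool) : Prop :=
  ∀ v ∈ F.V,
    ((F.η v = .acDown ∨ F.η v = .acUp) →
      ∀ e₁ ∈ F.edges v, ∀ e₂ ∈ F.edges v, π e₁ = π e₂) ∧
    ((F.η v = .aiDown ∨ F.η v = .aiUp) →
      ∃ e₁ ∈ F.edges v, ∃ e₂ ∈ F.edges v, π e₁ ≠ π e₂)

/-- `F` is an atomic flow. -/
def IsFlow (F : PreFlow) : Prop :=
  F.degOK ∧ F.endpointsOK ∧ F.Acyclic ∧ ∃ π, F.PolarityOK π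

end PreFlow

/-! ### Paths, ai-paths, cycles. -/

/-- An endpoint of a path: a vertex, or `⊤`, or `⊥`. -/
inductive VPt : Type
  | ver : ℕ → VPt
  | top : VPt
  | bot : VPt
  deriving DecidableEq

/-- The upper endpoint of edge `e` is `ν`. -/
def srcOK (F : PreFlow) (ν : VPt) (e : ℕ) : Prop :=
  match ν with
  | .ver v => F.up e = some v
  | .top => F.up e = none
  | .bot => False

/-- The lower endpoint of edge `e` is `ν`. -/
def tgtOK (F : PreFlow) (ν : VPt) (e : ℕ) : Prop :=
  match ν with
  | .ver v => F.lo e = some v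
  | .bot => F.lo e = none
  | .top => False

/-- A downward path from `ν` to `ν'` (a nonempty sequence of edges, each
hanging from the lower endpoint of the previous one). -/
def IsDownPath (F : PreFlow) (ν ν' : VPt) (l : List ℕ) : Prop :=
  l ≠ [] ∧ (∀ e ∈ l, e ∈ F.E) ∧
  (∀ i, i + 1 < l.length →
    ∃ v ∈ F.V, F.lo (l.getD i 0) = some v ∧ F.up (l.getD (i + 1) 0) = some v) ∧
  srcOK F ν (l.getD 0 0) ∧ tgtOK F ν' (l.getD (l.length - 1) 0)

/-- A path from `ν` to `ν'`: a downward path, or the reverse of a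
downward path from `ν'` to `ν`. -/
def IsPath (F : PreFlow) (ν ν' : VPt) (l : List ℕ) : Prop :=
  IsDownPath F ν ν' l ∨ IsDownPath F ν' ν l.reverse

/-- ai-paths: paths, closed under concatenation (in distinct edges) at
interaction and cointeraction vertices. -/
inductive AIPath (F : PreFlow) : VPt → VPt → List ℕ → Prop
  | single {ν ν' : VPt} {l : List ℕ} : IsPath F ν ν' l → AIPath F ν ν' l
  | join {ν ν' : VPt} {v : ℕ} {l₁ l₂ : List ℕ} {e e' : ℕ} :
      v ∈ F.V → (F.η v = .aiDown ∨ F.η v = .aiUp) →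
      AIPath F ν (.ver v) (l₁ ++ [e]) →
      AIPath F (.ver v) ν' (e' :: l₂) →
      e ≠ e' →
      AIPath F ν ν' (l₁ ++ [e] ++ e' :: l₂)

/-- The flow contains an ai-cycle: an ai-path from a vertex to itself in
which no edge appears twice. -/
def HasAICycle (F : PreFlow) : Prop :=
  ∃ v l, v ∈ F.V ∧ AIPath F (.ver v) (.ver v) l ∧ l.Nodup

def CycleFree (F : PreFlow) : Prop := ¬ HasAICycle F

/-- An ai-connection: a path from an interaction vertex to a cointeraction
vertex or vice versa. -/
def IsConnection (F : PreFlow) (l : List ℕ) : Prop :=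
  ∃ v v', v ∈ F.V ∧ v' ∈ F.V ∧
    ((F.η v = .aiDown ∧ F.η v' = .aiUp) ∨
     (F.η v = .aiUp ∧ F.η v' = .aiDown)) ∧
    IsPath F (.ver v) (.ver v') l

/-- A simple edge: an ai-connection consisting of a single edge. -/
def SimpleEdge (F : PreFlow) (e : ℕ) : Prop := IsConnection F [e]

/-- A clean path: an ai-path all of whose ai-connections are simple edges. -/
def IsCleanPath (F : PreFlow) (ν ν' : VPt) (l : List ℕ) : Prop :=
  AIPath F ν ν' l ∧
  ∀ l₁ l₂ l₃, l = l₁ ++ l₂ ++ l₃ → IsConnection F l₂ → l₂.length = 1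

/-! ### Local flow reduction rules. -/

open PreFlow

/-- Rule `w↓-c↓`: a weakening feeding a contraction is erased, merging the
contraction's other two edges. -/
def RedWdCd (A B : PreFlow) : Prop :=
  ∃ v₁ v₂ e e₂ e₃,
    v₁ ∈ A.V ∧ v₂ ∈ A.V ∧ v₁ ≠ v₂ ∧
    A.η v₁ = .awDown ∧ A.η v₂ = .acDown ∧
    e ∈ A.E ∧ e₂ ∈ A.E ∧ e₃ ∈ A.E ∧ e ≠ e₂ ∧ e ≠ e₃ ∧ e₂ ≠ e₃ ∧
    A.up e = some v₁ ∧ A.lo e = some v₂ ∧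
    A.lo e₂ = some v₂ ∧ A.up e₃ = some v₂ ∧
    B.V = (A.V.erase v₁).erase v₂ ∧
    B.E = (A.E.erase e).erase e₃ ∧
    B.η = A.η ∧ B.up = A.up ∧
    B.lo = Function.update A.lo e₂ (A.lo e₃)

/-- Rule `c↑-w↑` (dual of `w↓-c↓`). -/
def RedCuWu (A B : PreFlow) : Prop :=
  ∃ v₁ v₂ e e₂ e₃,
    v₁ ∈ A.V ∧ v₂ ∈ A.V ∧ v₁ ≠ v₂ ∧
    A.η v₁ = .awUp ∧ A.η v₂ = .acUp ∧
    e ∈ A.E ∧ e₂ ∈ A.E ∧ e₃ ∈ A.E ∧ e ≠ e₂ ∧ e ≠ e₃ ∧ e₂ ≠ e₃ ∧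
    A.lo e = some v₁ ∧ A.up e = some v₂ ∧
    A.up e₂ = some v₂ ∧ A.lo e₃ = some v₂ ∧
    B.V = (A.V.erase v₁).erase v₂ ∧
    B.E = (A.E.erase e).erase e₃ ∧
    B.η = A.η ∧ B.lo = A.lo ∧
    B.up = Function.update A.up e₂ (A.up e₃)

/-- Rule `w↓-i↑`: a weakening feeding a cointeraction is replaced by a
coweakening on the other cointeraction edge. -/
def RedWdIu (A B : PreFlow) : Prop :=
  ∃ v₁ v₂ e e₂,
    v₁ ∈ A.V ∧ v₂ ∈ A.V ∧ v₁ ≠ v₂ ∧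
    A.η v₁ = .awDown ∧ A.η v₂ = .aiUp ∧
    e ∈ A.E ∧ e₂ ∈ A.E ∧ e ≠ e₂ ∧
    A.up e = some v₁ ∧ A.lo e = some v₂ ∧ A.lo e₂ = some v₂ ∧
    B.V = A.V.erase v₁ ∧ B.E = A.E.erase e ∧
    B.η = Function.update A.η v₂ .awUp ∧
    B.up = A.up ∧ B.lo = A.lo

/-- Rule `i↓-w↑` (dual of `w↓-i↑`). -/
def RedIdWu (A B : PreFlow) : Prop :=
  ∃ v₁ v₂ e e₂,
    v₁ ∈ A.V ∧ v₂ ∈ A.V ∧ v₁ ≠ v₂ ∧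
    A.η v₁ = .awUp ∧ A.η v₂ = .aiDown ∧
    e ∈ A.E ∧ e₂ ∈ A.E ∧ e ≠ e₂ ∧
    A.lo e = some v₁ ∧ A.up e = some v₂ ∧ A.up e₂ = some v₂ ∧
    B.V = A.V.erase v₁ ∧ B.E = A.E.erase e ∧
    B.η = Function.update A.η v₂ .awDown ∧
    B.up = A.up ∧ B.lo = A.lo

/-- Rule `w↓-w↑`: a weakening joined to a coweakening is erased. -/
def RedWdWu (A B : PreFlow) : Prop :=
  ∃ v₁ v₂ e,
    v₁ ∈ A.V ∧ v₂ ∈ A.V ∧ v₁ ≠ v₂ ∧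
    A.η v₁ = .awDown ∧ A.η v₂ = .awUp ∧
    e ∈ A.E ∧ A.up e = some v₁ ∧ A.lo e = some v₂ ∧
    B.V = (A.V.erase v₁).erase v₂ ∧ B.E = A.E.erase e ∧
    B.η = A.η ∧ B.up = A.up ∧ B.lo = A.lo

/-- Rule `w↓-c↑`: a weakening feeding a cocontraction is replaced by two
weakenings. -/
def RedWdCu (A B : PreFlow) : Prop :=
  ∃ v₁ v₂ e e₁ e₂,
    v₁ ∈ A.V ∧ v₂ ∈ A.V ∧ v₁ ≠ v₂ ∧
    A.η v₁ = .awDown ∧ A.η v₂ = .acUp ∧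
    e ∈ A.E ∧ e₁ ∈ A.E ∧ e₂ ∈ A.E ∧ e ≠ e₁ ∧ e ≠ e₂ ∧ e₁ ≠ e₂ ∧
    A.up e = some v₁ ∧ A.lo e = some v₂ ∧
    A.up e₁ = some v₂ ∧ A.up e₂ = some v₂ ∧
    B.V = A.V ∧ B.E = A.E.erase e ∧
    B.η = Function.update A.η v₂ .awDown ∧
    B.up = Function.update A.up e₁ (some v₁) ∧
    B.lo = A.lo

/-- Rule `c↓-w↑` (dual of `w↓-c↑`). -/
def RedCdWu (A B : PreFlow) : Prop :=
  ∃ v₁ v₂ e e₁ e₂,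
    v₁ ∈ A.V ∧ v₂ ∈ A.V ∧ v₁ ≠ v₂ ∧
    A.η v₁ = .awUp ∧ A.η v₂ = .acDown ∧
    e ∈ A.E ∧ e₁ ∈ A.E ∧ e₂ ∈ A.E ∧ e ≠ e₁ ∧ e ≠ e₂ ∧ e₁ ≠ e₂ ∧
    A.lo e = some v₁ ∧ A.up e = some v₂ ∧
    A.lo e₁ = some v₂ ∧ A.lo e₂ = some v₂ ∧
    B.V = A.V ∧ B.E = A.E.erase e ∧
    B.η = Function.update A.η v₂ .awUp ∧
    B.lo = Function.update A.lo e₁ (some v₁) ∧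
    B.up = A.up

/-- Rule `c↓-i↑`: a contraction whose output edge enters a cointeraction is
replaced by a cocontraction on the other cointeraction edge followed by two
cointeractions. -/
def RedCdIu (A B : PreFlow) : Prop :=
  ∃ v₁ v₂ v₃ e e₁ e₂ e₃ g₁ g₂,
    v₁ ∈ A.V ∧ v₂ ∈ A.V ∧ v₁ ≠ v₂ ∧ v₃ ∉ A.V ∧
    A.η v₁ = .acDown ∧ A.η v₂ = .aiUp ∧
    e ∈ A.E ∧ e₁ ∈ A.E ∧ e₂ ∈ A.E ∧ e₃ ∈ A.E ∧
    e ≠ e₁ ∧ e ≠ e₂ ∧ e ≠ e₃ ∧ e₁ ≠ e₂ ∧ e₁ ≠ e₃ ∧ e₂ ≠ e₃ ∧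
    g₁ ∉ A.E ∧ g₂ ∉ A.E ∧ g₁ ≠ g₂ ∧
    A.lo e₁ = some v₁ ∧ A.lo e₂ = some v₁ ∧
    A.up e = some v₁ ∧ A.lo e = some v₂ ∧ A.lo e₃ = some v₂ ∧
    B.V = insert v₃ A.V ∧
    B.E = insert g₁ (insert g₂ (A.E.erase e)) ∧
    B.η = Function.update (Function.update A.η v₁ .acUp) v₃ .aiUp ∧
    B.up = Function.update (Function.update A.up g₁ (some v₁)) g₂ (some v₁) ∧
    B.lo = Function.update (Function.update (Function.update
      (Function.update (Function.update A.lo e₁ (some v₂)) e₂ (some v₃))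
        e₃ (some v₁)) g₁ (some v₂)) g₂ (some v₃)

/-- Rule `i↓-c↑` (dual of `c↓-i↑`). -/
def RedIdCu (A B : PreFlow) : Prop :=
  ∃ v₁ v₂ v₃ e e₁ e₂ e₃ g₁ g₂,
    v₁ ∈ A.V ∧ v₂ ∈ A.V ∧ v₁ ≠ v₂ ∧ v₃ ∉ A.V ∧
    A.η v₁ = .acUp ∧ A.η v₂ = .aiDown ∧
    e ∈ A.E ∧ e₁ ∈ A.E ∧ e₂ ∈ A.E ∧ e₃ ∈ A.E ∧
    e ≠ e₁ ∧ e ≠ e₂ ∧ e ≠ e₃ ∧ e₁ ≠ e₂ ∧ e₁ ≠ e₃ ∧ e₂ ≠ e₃ ∧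
    g₁ ∉ A.E ∧ g₂ ∉ A.E ∧ g₁ ≠ g₂ ∧
    A.up e₁ = some v₁ ∧ A.up e₂ = some v₁ ∧
    A.lo e = some v₁ ∧ A.up e = some v₂ ∧ A.up e₃ = some v₂ ∧
    B.V = insert v₃ A.V ∧
    B.E = insert g₁ (insert g₂ (A.E.erase e)) ∧
    B.η = Function.update (Function.update A.η v₁ .acDown) v₃ .aiDown ∧
    B.lo = Function.update (Function.update A.lo g₁ (some v₁)) g₂ (some v₁) ∧
    B.up = Function.update (Function.update (Function.update
      (Function.update (Function.update A.up e₁ (some v₂)) e₂ (some v₃))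
        e₃ (some v₁)) g₁ (some v₂)) g₂ (some v₃)

/-- Rule `c↓-c↑`: a contraction whose output enters a cocontraction is
replaced by two cocontractions above two contractions, crosswise connected. -/
def RedCdCu (A B : PreFlow) : Prop :=
  ∃ v₁ v₂ v₃ v₄ e e₁ e₂ e₃ e₄ g₁₁ g₁₂ g₂₁ g₂₂,
    v₁ ∈ A.V ∧ v₂ ∈ A.V ∧ v₁ ≠ v₂ ∧
    v₃ ∉ A.V ∧ v₄ ∉ A.V ∧ v₃ ≠ v₄ ∧
    A.η v₁ = .acDown ∧ A.η v₂ = .acUp ∧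
    e ∈ A.E ∧ e₁ ∈ A.E ∧ e₂ ∈ A.E ∧ e₃ ∈ A.E ∧ e₄ ∈ A.E ∧
    e ≠ e₁ ∧ e ≠ e₂ ∧ e ≠ e₃ ∧ e ≠ e₄ ∧
    e₁ ≠ e₂ ∧ e₁ ≠ e₃ ∧ e₁ ≠ e₄ ∧ e₂ ≠ e₃ ∧ e₂ ≠ e₄ ∧ e₃ ≠ e₄ ∧
    g₁₁ ∉ A.E ∧ g₁₂ ∉ A.E ∧ g₂₁ ∉ A.E ∧ g₂₂ ∉ A.E ∧
    g₁₁ ≠ g₁₂ ∧ g₁₁ ≠ g₂₁ ∧ g₁₁ ≠ g₂₂ ∧ g₁₂ ≠ g₂₁ ∧ g₁₂ ≠ g₂₂ ∧ g₂₁ ≠ g₂₂ ∧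
    A.lo e₁ = some v₁ ∧ A.lo e₂ = some v₁ ∧ A.up e = some v₁ ∧
    A.lo e = some v₂ ∧ A.up e₃ = some v₂ ∧ A.up e₄ = some v₂ ∧
    B.V = insert v₃ (insert v₄ A.V) ∧
    B.E = insert g₁₁ (insert g₁₂ (insert g₂₁ (insert g₂₂ (A.E.erase e)))) ∧
    B.η = Function.update (Function.update (Function.update
      (Function.update A.η v₁ .acUp) v₂ .acUp) v₃ .acDown) v₄ .acDown ∧
    B.up = Function.update (Function.update (Function.update
      (Function.update (Function.update (Function.update A.up
        e₃ (some v₃)) e₄ (some v₄)) g₁₁ (some v₁)) g₁₂ (some v₁))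
          g₂₁ (some v₂)) g₂₂ (some v₂) ∧
    B.lo = Function.update (Function.update (Function.update
      (Function.update (Function.update A.lo e₂ (some v₂)) g₁₁ (some v₃))
        g₁₂ (some v₄)) g₂₁ (some v₃)) g₂₂ (some v₄)

/-- One step of the flow rewriting system `w`. -/
def StepW (A B : PreFlow) : Prop :=
  RedWdCd A B ∨ RedCuWu A B ∨ RedWdIu A B ∨ RedIdWu A B ∨
  RedWdWu A B ∨ RedWdCu A B ∨ RedCdWu A B

/-- One step of the flow rewriting system `c`. -/
def StepC (A B : PreFlow) : Prop :=
  RedCdIu A B ∨ RedIdCu A B ∨ RedCdCu A B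

/-- `A` is normal for the flow rewriting system `w`. -/
def NormalW (A : PreFlow) : Prop := ¬ ∃ B, StepW A B

/-- `A` is normal for the flow rewriting system `c`. -/
def NormalC (A : PreFlow) : Prop := ¬ ∃ B, StepC A B

/-! ### Flow isomorphisms. -/

structure FlowIso (A B : PreFlow) : Type where
  vmap : ℕ → ℕ
  emap : ℕ → ℕ
  vbij : Set.BijOn vmap (A.V : Set ℕ) (B.V : Set ℕ)
  ebij : Set.BijOn emap (A.E : Set ℕ) (B.E : Set ℕ)
  lab : ∀ v ∈ A.V, B.η (vmap v) = A.η v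
  upc : ∀ e ∈ A.E, B.up (emap e) = (A.up e).map vmap
  loc : ∀ e ∈ A.E, B.lo (emap e) = (A.lo e).map vmap

/-! ### The global reduction `→se` (elimination of a simple edge). -/

/-- The flow obtained from `B` by eliminating the simple edge `e0` between
the interaction `vi` and the cointeraction `vc` (with `e2` the other lower
edge of `vi` and `e3` the other upper edge of `vc`): two copies (tags `0`,
hat, the lower one, and `1`, tilde, the upper one) of the remaining flow are
glued by identifying the hat copy of `e2` with the tilde copy of `e3`; a
weakening (vertex `(2,0)`) is placed above the tilde copy of `e2`, a
coweakening (vertex `(2,1)`) below the hat copy of `e3`; each upper edge `ε`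
of `B` gives a cocontraction (vertex `(3,ε)`, with a new upper edge `(3,ε)`)
joining the two copies of `ε`, and dually each lower edge `ε'` of `B` gives
a contraction (vertex `(4,ε')`, with a new lower edge `(4,ε')`). -/
def seFlow (B : PreFlow) (vi vc e0 e2 e3 : ℕ) : PreFlow :=
  { V := ((B.V.erase vi).erase vc).image (Nat.pair 0) ∪
         ((B.V.erase vi).erase vc).image (Nat.pair 1) ∪
         {Nat.pair 2 0, Nat.pair 2 1} ∪
         (B.E.filter (fun e => B.up e = none)).image (Nat.pair 3) ∪
         (B.E.filter (fun e => B.lo e = none)).image (Nat.pair 4),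
    E := (B.E.erase e0).image (Nat.pair 0) ∪
         (B.E.erase e0).image (fun e => if e = e3 then Nat.pair 0 e2 else Nat.pair 1 e) ∪
         (B.E.filter (fun e => B.up e = none)).image (Nat.pair 3) ∪
         (B.E.filter (fun e => B.lo e = none)).image (Nat.pair 4),
    η := fun x =>
      if (Nat.unpair x).1 = 2 then
        (if (Nat.unpair x).2 = 0 then FlowLabel.awDown else FlowLabel.awUp)
      else if (Nat.unpair x).1 = 3 then FlowLabel.acUp
      else if (Nat.unpair x).1 = 4 then FlowLabel.acDown
      else B.η (Nat.unpair x).2,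
    up := fun x =>
      let t := (Nat.unpair x).1
      let y := (Nat.unpair x).2
      if t = 0 then
        (if y = e2 then
          (match B.up e3 with
           | some v => some (Nat.pair 1 v)
           | none => some (Nat.pair 3 e3))
        else
          (match B.up y with
           | some v => some (Nat.pair 0 v)
           | none => some (Nat.pair 3 y)))
      else if t = 1 then
        (if y = e2 then some (Nat.pair 2 0)
        else
          (match B.up y with
           | some v => some (Nat.pair 1 v)
           | none => some (Nat.pair 3 y)))
      else if t = 3 then none
      else some (Nat.pair 4 y),
    lo := fun x =>
      let t := (Nat.unpair x).1
      let y := (Nat.unpair x).2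
      if t = 0 then
        (if y = e2 then
          (match B.lo e2 with
           | some v => some (Nat.pair 0 v)
           | none => some (Nat.pair 4 e2))
        else if y = e3 then some (Nat.pair 2 1)
        else
          (match B.lo y with
           | some v => some (Nat.pair 0 v)
           | none => some (Nat.pair 4 y)))
      else if t = 1 then
        (match B.lo y with
         | some v => some (Nat.pair 1 v)
         | none => some (Nat.pair 4 y))
      else if t = 3 then some (Nat.pair 3 y)
      else none }

/-- The reduction `→se`: elimination of a simple edge (up to flow
isomorphism). -/
def RedSE (B C : PreFlow) : Prop :=
  ∃ vi vc e0 e2 e3,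
    vi ∈ B.V ∧ vc ∈ B.V ∧ vi ≠ vc ∧
    B.η vi = .aiDown ∧ B.η vc = .aiUp ∧
    e0 ∈ B.E ∧ e2 ∈ B.E ∧ e3 ∈ B.E ∧
    e0 ≠ e2 ∧ e0 ≠ e3 ∧ e2 ≠ e3 ∧
    B.up e0 = some vi ∧ B.lo e0 = some vc ∧
    B.up e2 = some vi ∧ B.lo e3 = some vc ∧
    Nonempty (FlowIso C (seFlow B vi vc e0 e2 e3))

/-! ### The atomic flow associated with a derivation. -/

/-- Correspondence conditions for a linear rule applied at position `q`:
for each pair `(c₁, c₂)` in `cs`, occurrences at `q ++ c₁ ++ p` in the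
conclusion (formula `i+1`) are traced to occurrences at `q ++ c₂ ++ p` in
the premiss (formula `i`). -/
def corrCond (f : ℕ → List Bool → ℕ) (i : ℕ) (q : List Bool) (ψ : Formula)
    (cs : List (List Bool × List Bool)) : Prop :=
  ∀ c ∈ cs, ∀ p : List Bool, ψ.IsOcc (q ++ c.1 ++ p) →
    f (i + 1) (q ++ c.1 ++ p) = f i (q ++ c.2 ++ p)

/-- The tracing conditions for one inference step: occurrences in the
context are traced to the same edge, and the active occurrences of a
structural rule are related to the edges of the vertex `v` as prescribed by
its label, while the active occurrences of logical and `=` steps are traced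
to the same edges under the canonical correspondence. -/
def stepCond (A : PreFlow) (f : ℕ → List Bool → ℕ) (v : ℕ) (i : ℕ)
    (r : RuleName) (q : List Bool) (φ ψ : Formula) : Prop :=
  (∀ p, ¬ (q <+: p) → φ.IsOcc p → f (i + 1) p = f i p) ∧
  match r with
  | .aiDown =>
      A.η v = .aiDown ∧
      A.up (f (i + 1) (q ++ [false])) = some v ∧
      A.up (f (i + 1) (q ++ [true])) = some v ∧
      f (i + 1) (q ++ [false]) ≠ f (i + 1) (q ++ [true])
  | .aiUp =>
      A.η v = .aiUp ∧
      A.lo (f i (q ++ [false])) = some v ∧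
      A.lo (f i (q ++ [true])) = some v ∧
      f i (q ++ [false]) ≠ f i (q ++ [true])
  | .awDown => A.η v = .awDown ∧ A.up (f (i + 1) q) = some v
  | .awUp => A.η v = .awUp ∧ A.lo (f i q) = some v
  | .acDown =>
      A.η v = .acDown ∧
      A.lo (f i (q ++ [false])) = some v ∧
      A.lo (f i (q ++ [true])) = some v ∧
      A.up (f (i + 1) q) = some v ∧
      f i (q ++ [false]) ≠ f i (q ++ [true])
  | .acUp =>
      A.η v = .acUp ∧
      A.lo (f i q) = some v ∧
      A.up (f (i + 1) (q ++ [false])) = some v ∧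
      A.up (f (i + 1) (q ++ [true])) = some v ∧
      f (i + 1) (q ++ [false]) ≠ f (i + 1) (q ++ [true])
  | .s => corrCond f i q ψ
      [([false, false], [false]), ([false, true], [true, false]),
       ([true], [true, true])]
  | .m => corrCond f i q ψ
      [([false, false], [false, false]), ([true, false], [false, true]),
       ([false, true], [true, false]), ([true, true], [true, true])]
  | .eqOrComm => corrCond f i q ψ [([false], [true]), ([true], [false])]
  | .eqAndComm => corrCond f i q ψ [([false], [true]), ([true], [false])]
  | .eqOrAssocL => corrCond f i q ψ
      [([false], [false, false]), ([true, false], [false, true]),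
       ([true, true], [true])]
  | .eqOrAssocR => corrCond f i q ψ
      [([false, false], [false]), ([false, true], [true, false]),
       ([true], [true, true])]
  | .eqAndAssocL => corrCond f i q ψ
      [([false], [false, false]), ([true, false], [false, true]),
       ([true, true], [true])]
  | .eqAndAssocR => corrCond f i q ψ
      [([false, false], [false]), ([false, true], [true, false]),
       ([true], [true, true])]
  | .eqOrUnitDel => corrCond f i q ψ [([], [false])]
  | .eqOrUnitAdd => corrCond f i q ψ [([false], [])]
  | .eqAndUnitDel => corrCond f i q ψ [([], [false])]
  | .eqAndUnitAdd => corrCond f i q ψ [([false], [])]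
  | .eqTTDel => True
  | .eqTTAdd => True
  | .eqFFDel => True
  | .eqFFAdd => True

/-- `A` is the atomic flow associated with the derivation `Φ`, where `f`
maps each atom occurrence (formula index, position) of `Φ` to an edge of
`A`, and `g` assigns to each structural inference step its vertex. -/
def IsAssocFlow (Φ : Deriv) (A : PreFlow) (f : ℕ → List Bool → ℕ)
    (g : ℕ → ℕ) : Prop :=
  Φ.WF ∧ A.IsFlow ∧
  (∀ i p, i < Φ.nf → (Φ.fml i).IsOcc p → f i p ∈ A.E) ∧
  (∀ e ∈ A.E, ∃ i p, i < Φ.nf ∧ (Φ.fml i).IsOcc p ∧ f i p = e) ∧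
  (∀ i p p', i < Φ.nf → (Φ.fml i).IsOcc p → (Φ.fml i).IsOcc p' →
    f i p = f i p' → p = p') ∧
  (∀ p, (Φ.fml 0).IsOcc p → A.up (f 0 p) = none) ∧
  (∀ p, (Φ.fml Φ.steps.length).IsOcc p → A.lo (f Φ.steps.length p) = none) ∧
  (∀ i, i < Φ.steps.length → (Φ.stepAt i).1.isStructural = true → g i ∈ A.V) ∧
  (∀ v ∈ A.V, ∃ i, i < Φ.steps.length ∧
    (Φ.stepAt i).1.isStructural = true ∧ g i = v) ∧
  (∀ i j, i < Φ.steps.length → j < Φ.steps.length →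
    (Φ.stepAt i).1.isStructural = true → (Φ.stepAt j).1.isStructural = true →
    g i = g j → i = j) ∧
  (∀ i, i < Φ.steps.length →
    stepCond A f (g i) i (Φ.stepAt i).1 (Φ.stepAt i).2.1
      (Φ.fml i) (Φ.fml (i + 1)))

/-! ### Streamlining. -/

/-- No path from an interaction or weakening vertex to a cointeraction or
coweakening vertex. -/
def NoIWPath (A : PreFlow) : Prop :=
  ¬ ∃ v v' l, v ∈ A.V ∧ v' ∈ A.V ∧
      (A.η v = .aiDown ∨ A.η v = .awDown) ∧
      (A.η v' = .aiUp ∨ A.η v' = .awUp) ∧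
      IsPath A (.ver v) (.ver v') l

/-- `Φ` is a streamlined derivation. -/
def Streamlined (Φ : Deriv) : Prop :=
  ∃ A f g, IsAssocFlow Φ A f g ∧ NoIWPath A

/-- `Φ` is a super-streamlined derivation. -/
def SuperStreamlined (Φ : Deriv) : Prop :=
  ∃ A f g, IsAssocFlow Φ A f g ∧ NoIWPath A ∧ NormalW A

/-- `Φ` is a hyper-streamlined derivation. -/
def HyperStreamlined (Φ : Deriv) : Prop :=
  ∃ A f g, IsAssocFlow Φ A f g ∧ NoIWPath A ∧ NormalW A ∧ NormalC A

end AF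

namespace AF

/-!
SKS is sound for the Boolean semantics, so a provable formula is a tautology, and the cut-free
fragment is already complete for tautologies. Completeness is by Shannon expansion on an atom
`a`: from `t` the cut-free system derives `[a ∨ ā]`; on the left it derives `α[a := t]` under
`a` and absorbs the copy of `a` back into it by cocontraction, switch and coweakening, on the
right the same with `ā` and `α[a := f]`, and a generic contraction merges `[α ∨ α]` into `α`.
-/

open Relation

namespace Formula

@[simp] lemma sub_nil (φ : Formula) : φ.sub [] = some φ := by
  cases φ <;> rfl

@[simp] lemma repl_nil (φ ψ : Formula) : φ.repl [] ψ = ψ := by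
  cases φ <;> rfl

/-- Atom `(n, true)` denotes the variable `n`, atom `(n, false)` its negation. -/
def eval (v : ℕ → Bool) : Formula → Bool
  | .tt => true
  | .ff => false
  | .atom n b => v n == b
  | .or α β => eval v α || eval v β
  | .and α β => eval v α && eval v β

def vars : Formula → Finset ℕ
  | .tt => ∅
  | .ff => ∅
  | .atom n _ => {n}
  | .or α β => vars α ∪ vars β
  | .and α β => vars α ∪ vars β

/-- Substitute `t` for the atom `(n, b)` and `f` for its dual `(n, !b)`. -/
def assign (n : ℕ) (b : Bool) : Formula → Formula
  | .tt => .tt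
  | .ff => .ff
  | .atom m c => if m = n then (if c = b then .tt else .ff) else .atom m c
  | .or α β => .or (assign n b α) (assign n b β)
  | .and α β => .and (assign n b α) (assign n b β)

lemma vars_assign (n : ℕ) (b : Bool) (α : Formula) :
    (α.assign n b).vars ⊆ α.vars.erase n := by
  induction α with
  | tt | ff => simp [assign, vars]
  | atom m c =>
    by_cases hm : m = n
    · by_cases hc : c = b <;> simp [assign, vars, hm, hc]
    · simp [assign, vars, hm]
  | or α β ihα ihβ | and α β ihα ihβ =>
    simp only [assign, vars, Finset.erase_union_distrib]
    exact Finset.union_subset_union ihα ihβ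

lemma eval_assign (v : ℕ → Bool) (n : ℕ) (b : Bool) (α : Formula) :
    (α.assign n b).eval v = α.eval (Function.update v n b) := by
  induction α with
  | tt | ff => rfl
  | atom m c =>
    by_cases hm : m = n
    · subst hm
      by_cases hc : c = b <;> cases b <;> cases c <;> simp_all [assign, eval]
    · simp [assign, eval, hm]
  | or α β ihα ihβ | and α β ihα ihβ => simp [assign, eval, ihα, ihβ]

end Formula

open Formula

section Soundness

lemma RuleInstance.eval_imp {r : RuleName} {γ δ : Formula} (h : RuleInstance r γ δ)
    (v : ℕ → Bool) (hγ : γ.eval v = true) : δ.eval v = true := by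
  cases h <;> simp_all [eval] <;> first
    | tauto
    | (rename_i n b; cases b <;> simp_all)

lemma eval_repl_imp (v : ℕ → Bool) {γ δ : Formula} (himp : γ.eval v = true → δ.eval v = true) :
    ∀ (φ : Formula) (q : List Bool), φ.sub q = some γ →
      φ.eval v = true → (φ.repl q δ).eval v = true
  | φ, [], hs, hφ => by
    rw [sub_nil, Option.some_inj] at hs
    subst hs
    simpa using himp hφ
  | .or α β, false :: q, hs, hφ | .and α β, false :: q, hs, hφ => by
    have := eval_repl_imp v himp α q hs
    simp only [repl, eval, Bool.or_eq_true, Bool.and_eq_true] at hφ ⊢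
    tauto
  | .or α β, true :: q, hs, hφ | .and α β, true :: q, hs, hφ => by
    have := eval_repl_imp v himp β q hs
    simp only [repl, eval, Bool.or_eq_true, Bool.and_eq_true] at hφ ⊢
    tauto
  | .tt, _ :: _, hs, _ | .ff, _ :: _, hs, _ | .atom _ _, _ :: _, hs, _ => by
    simp [sub] at hs

lemma Derives.eval_imp {S : Set RuleName} {φ ψ : Formula} (h : Derives S φ ψ)
    (v : ℕ → Bool) (hφ : φ.eval v = true) : ψ.eval v = true := by
  induction h with
  | refl => exact hφ
  | tail _ hstep ih =>
    obtain ⟨r, -, q, γ, δ, hs, hr, rfl⟩ := hstep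
    exact eval_repl_imp v (hr.eval_imp v) _ q hs ih

end Soundness

section Congruence

variable {S : Set RuleName}

lemma Step.or_left {α α' β : Formula} (h : Step S α α') : Step S (.or α β) (.or α' β) := by
  obtain ⟨r, hr, q, γ, δ, hs, hi, rfl⟩ := h
  exact ⟨r, hr, false :: q, γ, δ, hs, hi, rfl⟩

lemma Step.or_right {α β β' : Formula} (h : Step S β β') : Step S (.or α β) (.or α β') := by
  obtain ⟨r, hr, q, γ, δ, hs, hi, rfl⟩ := h
  exact ⟨r, hr, true :: q, γ, δ, hs, hi, rfl⟩

lemma Step.and_left {α α' β : Formula} (h : Step S α α') : Step S (.and α β) (.and α' β) := by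
  obtain ⟨r, hr, q, γ, δ, hs, hi, rfl⟩ := h
  exact ⟨r, hr, false :: q, γ, δ, hs, hi, rfl⟩

lemma Step.and_right {α β β' : Formula} (h : Step S β β') : Step S (.and α β) (.and α β') := by
  obtain ⟨r, hr, q, γ, δ, hs, hi, rfl⟩ := h
  exact ⟨r, hr, true :: q, γ, δ, hs, hi, rfl⟩

lemma Derives.or {α α' β β' : Formula} (h₁ : Derives S α α') (h₂ : Derives S β β') :
    Derives S (.or α β) (.or α' β') :=
  (h₁.lift (Formula.or · β) fun _ _ => Step.or_left).trans
    (h₂.lift (Formula.or α') fun _ _ => Step.or_right)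

lemma Derives.and {α α' β β' : Formula} (h₁ : Derives S α α') (h₂ : Derives S β β') :
    Derives S (.and α β) (.and α' β') :=
  (h₁.lift (Formula.and · β) fun _ _ => Step.and_left).trans
    (h₂.lift (Formula.and α') fun _ _ => Step.and_right)

end Congruence

abbrev CutFreeDerives : Formula → Formula → Prop :=
  Derives {r : RuleName | r ≠ RuleName.aiUp}

namespace CutFreeDerives

lemma rule {r : RuleName} {γ δ : Formula} (h : RuleInstance r γ δ)
    (hr : r ≠ RuleName.aiUp := by decide) : CutFreeDerives γ δ :=
  ReflTransGen.single ⟨r, hr, [], γ, δ, sub_nil γ, h, (repl_nil γ δ).symm⟩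

lemma ff_tt : CutFreeDerives .ff .tt :=
  (rule .eqFFAdd).trans <|
  (Derives.and ((rule (.awDown 0 true)).trans (rule (.awUp 0 true)))
    ((rule (.awDown 0 true)).trans (rule (.awUp 0 true)))).trans <|
  rule (.eqAndUnitDel .tt)

lemma weakening : ∀ α : Formula, CutFreeDerives .ff α
  | .tt => ff_tt
  | .ff => .refl
  | .atom n b => rule (.awDown n b)
  | .or α β => (rule (.eqOrUnitAdd .ff)).trans (Derives.or (weakening α) (weakening β))
  | .and α β => (rule .eqFFAdd).trans (Derives.and (weakening α) (weakening β))

lemma contraction : ∀ α : Formula, CutFreeDerives (.or α α) α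
  | .tt => rule .eqTTDel
  | .ff => rule (.eqOrUnitDel .ff)
  | .atom n b => rule (.acDown n b)
  | .or α β =>
    (rule (.eqOrAssocL α β (.or α β))).trans <|
    (Derives.or .refl (Derives.or .refl (rule (.eqOrComm α β)))).trans <|
    (Derives.or .refl (rule (.eqOrAssocR β β α))).trans <|
    (Derives.or .refl (Derives.or (contraction β) .refl)).trans <|
    (Derives.or .refl (rule (.eqOrComm β α))).trans <|
    (rule (.eqOrAssocR α α β)).trans <|
    Derives.or (contraction α) .refl
  | .and α β => (rule (.m α β α β)).trans (Derives.and (contraction α) (contraction β))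

lemma atom_and_elim (n : ℕ) (b : Bool) (β : Formula) :
    CutFreeDerives (.and (.atom n b) β) β :=
  (Derives.and (rule (.awUp n b)) .refl).trans <|
  (rule (.eqAndComm .tt β)).trans <|
  rule (.eqAndUnitDel β)

/-- `ac↑` duplicates the atom and switch (in a disjunction) or associativity (in a conjunction)
hands one copy to each side; at a leaf the copy either restores the atom that `assign` turned
into `t`, or is coweakened away. -/
lemma atom_and_assign (n : ℕ) (b : Bool) : ∀ α : Formula,
    CutFreeDerives (.and (.atom n b) (α.assign n b)) α
  | .tt => atom_and_elim n b .tt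
  | .ff => atom_and_elim n b .ff
  | .atom m c => by
    by_cases hm : m = n
    · subst hm
      by_cases hc : c = b
      · subst hc
        simpa [assign] using rule (.eqAndUnitDel (.atom m c))
      · simp only [assign, if_neg hc]
        exact (atom_and_elim m b .ff).trans (rule (.awDown m c))
    · simp only [assign, if_neg hm]
      exact atom_and_elim n b (.atom m c)
  | .or β₁ β₂ =>
    let a := Formula.atom n b
    let s₁ := β₁.assign n b
    let s₂ := β₂.assign n b
    (Derives.and (rule (.acUp n b)) .refl).trans <|
    (rule (.eqAndAssocL a a (.or s₁ s₂))).trans <|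
    (Derives.and .refl (rule (.s a s₁ s₂))).trans <|
    (Derives.and .refl (Derives.or (atom_and_assign n b β₁) .refl)).trans <|
    (Derives.and .refl (rule (.eqOrComm β₁ s₂))).trans <|
    (rule (.s a s₂ β₁)).trans <|
    (Derives.or (atom_and_assign n b β₂) .refl).trans <|
    rule (.eqOrComm β₂ β₁)
  | .and β₁ β₂ =>
    let a := Formula.atom n b
    let s₁ := β₁.assign n b
    let s₂ := β₂.assign n b
    (Derives.and (rule (.acUp n b)) .refl).trans <|
    (rule (.eqAndAssocL a a (.and s₁ s₂))).trans <|
    (Derives.and .refl (rule (.eqAndAssocR a s₁ s₂))).trans <|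
    (Derives.and .refl (Derives.and (atom_and_assign n b β₁) .refl)).trans <|
    (Derives.and .refl (rule (.eqAndComm β₁ s₂))).trans <|
    (rule (.eqAndAssocR a s₂ β₁)).trans <|
    (Derives.and (atom_and_assign n b β₂) .refl).trans <|
    rule (.eqAndComm β₂ β₁)

lemma atom_of_assign {n : ℕ} {b : Bool} {α : Formula}
    (h : CutFreeDerives .tt (α.assign n b)) : CutFreeDerives (.atom n b) α :=
  (rule (.eqAndUnitAdd _)).trans <| (Derives.and .refl h).trans (atom_and_assign n b α)

lemma of_vars_eq_empty : ∀ α : Formula, α.vars = ∅ → α.eval (fun _ => false) = true →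
    CutFreeDerives .tt α
  | .tt, _, _ => .refl
  | .ff, _, h => by simp [eval] at h
  | .atom n b, h, _ => by simp [vars] at h
  | .or α β, h, he => by
    rw [vars, Finset.union_eq_empty] at h
    rw [eval, Bool.or_eq_true] at he
    refine (rule (.eqOrUnitAdd .tt)).trans ?_
    rcases he with he | he
    · exact Derives.or (of_vars_eq_empty α h.1 he) (weakening β)
    · exact (rule (.eqOrComm .tt .ff)).trans
        (Derives.or (weakening α) (of_vars_eq_empty β h.2 he))
  | .and α β, h, he => by
    rw [vars, Finset.union_eq_empty] at h
    rw [eval, Bool.and_eq_true] at he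
    exact (rule (.eqAndUnitAdd .tt)).trans
      (Derives.and (of_vars_eq_empty α h.1 he.1) (of_vars_eq_empty β h.2 he.2))

lemma of_vars_subset_of_tautology (s : Finset ℕ) :
    ∀ α : Formula, α.vars ⊆ s → (∀ v, α.eval v = true) → CutFreeDerives .tt α := by
  induction s using Finset.induction_on with
  | empty =>
    intro α hs hα
    exact of_vars_eq_empty α (Finset.subset_empty.mp hs) (hα _)
  | insert n s _ ih =>
    intro α hs hα
    have hassign (b : Bool) : CutFreeDerives .tt (α.assign n b) := by
      refine ih _ ?_ fun v => by rw [eval_assign]; exact hα _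
      refine (vars_assign n b α).trans fun m hm => ?_
      obtain ⟨hmn, hm⟩ := Finset.mem_erase.mp hm
      exact (Finset.mem_insert.mp (hs hm)).resolve_left hmn
    exact (rule (.aiDown n true)).trans <|
      (Derives.or (atom_of_assign (hassign true)) (atom_of_assign (hassign false))).trans
        (contraction α)

lemma of_tautology {α : Formula} (hα : ∀ v, α.eval v = true) : CutFreeDerives .tt α :=
  of_vars_subset_of_tautology α.vars α le_rfl hα

end CutFreeDerives

/-- Cut elimination: every SKS proof of `α` (a derivation
from `t` to `α` using all SKS rules) can be replaced by a cut-free SKS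
proof of `α`, i.e. one using no instance of `ai↑`. -/
theorem statement_1 (α : Formula) (h : Derives Set.univ Formula.tt α) :
    Derives {r : RuleName | r ≠ RuleName.aiUp} Formula.tt α :=
  CutFreeDerives.of_tautology fun v => h.eval_imp v rfl

end AF
end

section
/- For every SKS proof of a formula α, there exists a KS proof of α, where system KS is SKS without the rules ai↑, aw↑ and ac↑ (that is, KS has only the rules ai↓, aw↓, ac↓, s, m and =). -/
set_option linter.unusedVariables false

namespace AF

/-- The rules of system KS: `ai↓`, `aw↓`, `ac↓`, `s`, `m` and `=`. -/
def KSRules : Set RuleName :=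
  {r | r = RuleName.aiDown ∨ r = RuleName.awDown ∨ r = RuleName.acDown ∨
       r = RuleName.s ∨ r = RuleName.m ∨ r.isEq = true}


/-! ### Auxiliary development for the proof of Statement 3. -/

open Relation

/-- Boolean evaluation of formulae. -/
def eval (ν : ℕ → Bool) : Formula → Bool
  | .tt => true
  | .ff => false
  | .atom n b => ν n == b
  | .or a b => eval ν a || eval ν b
  | .and a b => eval ν a && eval ν b

lemma ruleInstance_sound {ν : ℕ → Bool} {r : RuleName} {γ δ : Formula}
    (h : RuleInstance r γ δ) (hγ : eval ν γ = true) : eval ν δ = true := by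
  cases h <;> simp_all [eval] <;> try tauto
  case aiDown n b => cases b <;> cases hn : ν n <;> simp [hn]
  case aiUp n b => cases b <;> simp_all

lemma repl_sound {ν : ℕ → Bool} :
    ∀ (q : List Bool) (φ γ δ : Formula), φ.sub q = some γ →
      (eval ν γ = true → eval ν δ = true) → eval ν φ = true →
      eval ν (φ.repl q δ) = true := by
  intro q
  induction q with
  | nil =>
      intro φ γ δ h1 h2 h3
      simp [Formula.sub] at h1
      subst h1
      simpa [Formula.repl] using h2 h3
  | cons b q ih =>
      intro φ γ δ h1 h2 h3
      cases φ with
      | or α β =>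
          cases b with
          | false =>
              have h1' : α.sub q = some γ := h1
              rw [show Formula.repl (.or α β) (false :: q) δ = .or (α.repl q δ) β from by simp [Formula.repl]]
              simp [eval] at h3 ⊢
              rcases h3 with h3 | h3
              · exact Or.inl (ih α γ δ h1' h2 h3)
              · exact Or.inr h3
          | true =>
              have h1' : β.sub q = some γ := h1
              rw [show Formula.repl (.or α β) (true :: q) δ = .or α (β.repl q δ) from by simp [Formula.repl]]
              simp [eval] at h3 ⊢
              rcases h3 with h3 | h3
              · exact Or.inl h3
              · exact Or.inr (ih β γ δ h1' h2 h3)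
      | and α β =>
          cases b with
          | false =>
              have h1' : α.sub q = some γ := h1
              rw [show Formula.repl (.and α β) (false :: q) δ = .and (α.repl q δ) β from by simp [Formula.repl]]
              simp [eval] at h3 ⊢
              exact ⟨ih α γ δ h1' h2 h3.1, h3.2⟩
          | true =>
              have h1' : β.sub q = some γ := h1
              rw [show Formula.repl (.and α β) (true :: q) δ = .and α (β.repl q δ) from by simp [Formula.repl]]
              simp [eval] at h3 ⊢
              exact ⟨h3.1, ih β γ δ h1' h2 h3.2⟩
      | tt => simp [Formula.sub] at h1
      | ff => simp [Formula.sub] at h1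
      | atom n bb => simp [Formula.sub] at h1

lemma step_sound {ν : ℕ → Bool} {S : Set RuleName} {φ ψ : Formula}
    (h : Step S φ ψ) (hφ : eval ν φ = true) : eval ν ψ = true := by
  obtain ⟨r, hr, q, hq⟩ := h
  obtain ⟨γ, δ, h1, h2, h3⟩ := hq
  subst h3
  exact repl_sound q φ γ δ h1 (ruleInstance_sound h2) hφ

lemma derives_sound {ν : ℕ → Bool} {S : Set RuleName} {φ ψ : Formula}
    (h : Derives S φ ψ) (hφ : eval ν φ = true) : eval ν ψ = true := by
  induction h with
  | refl => exact hφ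
  | tail _ hstep ih => exact step_sound hstep ih

/-! #### Basic KS machinery. -/

lemma ks_ai : RuleName.aiDown ∈ KSRules := Or.inl rfl
lemma ks_aw : RuleName.awDown ∈ KSRules := Or.inr (Or.inl rfl)
lemma ks_ac : RuleName.acDown ∈ KSRules := Or.inr (Or.inr (Or.inl rfl))
lemma ks_s : RuleName.s ∈ KSRules := Or.inr (Or.inr (Or.inr (Or.inl rfl)))
lemma ks_m : RuleName.m ∈ KSRules := Or.inr (Or.inr (Or.inr (Or.inr (Or.inl rfl))))
lemma ks_eq {r : RuleName} (h : r.isEq = true) : r ∈ KSRules :=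
  Or.inr (Or.inr (Or.inr (Or.inr (Or.inr h))))

lemma kstep {r : RuleName} {γ δ : Formula} (hr : r ∈ KSRules)
    (h : RuleInstance r γ δ) : Derives KSRules γ δ :=
  ReflTransGen.single ⟨r, hr, [], ⟨γ, δ, by simp [Formula.sub], h, by simp [Formula.repl]⟩⟩

lemma keq {r : RuleName} {γ δ : Formula} (h : RuleInstance r γ δ)
    (hr : r.isEq = true := by rfl) : Derives KSRules γ δ :=
  kstep (ks_eq hr) h

lemma step_or_left {S : Set RuleName} {φ ψ : Formula} (χ : Formula)
    (h : Step S φ ψ) : Step S (.or φ χ) (.or ψ χ) := by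
  obtain ⟨r, hr, q, γ, δ, h1, h2, h3⟩ := h
  exact ⟨r, hr, false :: q, γ, δ, h1, h2, by rw [h3]; simp [Formula.repl]⟩

lemma step_or_right {S : Set RuleName} {φ ψ : Formula} (χ : Formula)
    (h : Step S φ ψ) : Step S (.or χ φ) (.or χ ψ) := by
  obtain ⟨r, hr, q, γ, δ, h1, h2, h3⟩ := h
  exact ⟨r, hr, true :: q, γ, δ, h1, h2, by rw [h3]; simp [Formula.repl]⟩

lemma step_and_left {S : Set RuleName} {φ ψ : Formula} (χ : Formula)
    (h : Step S φ ψ) : Step S (.and φ χ) (.and ψ χ) := by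
  obtain ⟨r, hr, q, γ, δ, h1, h2, h3⟩ := h
  exact ⟨r, hr, false :: q, γ, δ, h1, h2, by rw [h3]; simp [Formula.repl]⟩

lemma step_and_right {S : Set RuleName} {φ ψ : Formula} (χ : Formula)
    (h : Step S φ ψ) : Step S (.and χ φ) (.and χ ψ) := by
  obtain ⟨r, hr, q, γ, δ, h1, h2, h3⟩ := h
  exact ⟨r, hr, true :: q, γ, δ, h1, h2, by rw [h3]; simp [Formula.repl]⟩

lemma derives_or_left {S : Set RuleName} {φ ψ : Formula} (h : Derives S φ ψ) (χ : Formula) : Derives S (.or φ χ) (.or ψ χ) := by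
  induction h with
  | refl => exact .refl
  | tail _ hstep ih => exact ih.tail (step_or_left χ hstep)

lemma derives_or_right {S : Set RuleName} {φ ψ : Formula} (χ : Formula) (h : Derives S φ ψ) : Derives S (.or χ φ) (.or χ ψ) := by
  induction h with
  | refl => exact .refl
  | tail _ hstep ih => exact ih.tail (step_or_right χ hstep)

lemma derives_and_left {S : Set RuleName} {φ ψ : Formula} (h : Derives S φ ψ) (χ : Formula) : Derives S (.and φ χ) (.and ψ χ) := by
  induction h with
  | refl => exact .refl
  | tail _ hstep ih => exact ih.tail (step_and_left χ hstep)

lemma derives_and_right {S : Set RuleName} {φ ψ : Formula} (χ : Formula) (h : Derives S φ ψ) : Derives S (.and χ φ) (.and χ ψ) := by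
  induction h with
  | refl => exact .refl
  | tail _ hstep ih => exact ih.tail (step_and_right χ hstep)

/-! #### Derived macro rules of KS. -/

lemma ff_tt : Derives KSRules .ff .tt := by
  have h1 : Derives KSRules .ff (.and .ff .tt) :=
    keq (.eqAndUnitAdd .ff)
  have h2 : Derives KSRules (.and .ff .tt) (.and .ff (.or .tt .tt)) :=
    derives_and_right _ (keq .eqTTAdd)
  have h3 : Derives KSRules (.and .ff (.or .tt .tt)) (.or (.and .ff .tt) .tt) :=
    kstep ks_s (.s .ff .tt .tt)
  have h4 : Derives KSRules (.or (.and .ff .tt) .tt) (.or .ff .tt) :=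
    derives_or_left (keq (.eqAndUnitDel .ff)) _
  have h5 : Derives KSRules (.or .ff .tt) (.or .tt .ff) :=
    keq (.eqOrComm .ff .tt)
  have h6 : Derives KSRules (.or .tt .ff) .tt :=
    keq (.eqOrUnitDel .tt)
  exact h1.trans (h2.trans (h3.trans (h4.trans (h5.trans h6))))

/-- generic weakening `f ⟹ β` in KS. -/
lemma wk : ∀ β : Formula, Derives KSRules .ff β
  | .ff => .refl
  | .tt => ff_tt
  | .atom n b => kstep ks_aw (.awDown n b)
  | .or β γ =>
      (keq (.eqOrUnitAdd .ff)).trans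
        ((derives_or_left (wk β) .ff).trans (derives_or_right β (wk γ)))
  | .and β γ =>
      (keq .eqFFAdd).trans
        ((derives_and_left (wk β) .ff).trans (derives_and_right β (wk γ)))

/-- generic contraction `[β ∨ β] ⟹ β` in KS. -/
lemma con : ∀ β : Formula, Derives KSRules (.or β β) β
  | .tt => keq .eqTTDel
  | .ff => keq (.eqOrUnitDel .ff)
  | .atom n b => kstep ks_ac (.acDown n b)
  | .and β γ =>
      (kstep ks_m (.m β γ β γ)).trans
        ((derives_and_left (con β) _).trans (derives_and_right _ (con γ)))
  | .or β γ =>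
      (keq (.eqOrAssocL β γ (.or β γ))).trans <|
        (derives_or_right β
          ((keq (.eqOrComm γ (.or β γ))).trans
            (keq (.eqOrAssocL β γ γ)))).trans <|
        (keq (.eqOrAssocR β β (.or γ γ))).trans <|
        (derives_or_left (con β) _).trans (derives_or_right β (con γ))

lemma orIntro (β γ : Formula) : Derives KSRules β (.or β γ) :=
  (keq (.eqOrUnitAdd β)).trans (derives_or_right β (wk γ))

lemma orIntroR (β γ : Formula) : Derives KSRules β (.or γ β) :=
  (orIntro β γ).trans (keq (.eqOrComm β γ))

/-! #### Lists of formulae as disjunctions. -/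

/-- Disjunction of a list of formulae. -/
def big : List Formula → Formula
  | [] => .ff
  | β :: Γ => .or β (big Γ)

/-- Size of a formula. -/
def fsize : Formula → ℕ
  | .tt => 1
  | .ff => 1
  | .atom _ _ => 1
  | .or a b => fsize a + fsize b + 1
  | .and a b => fsize a + fsize b + 1

lemma fsize_pos (β : Formula) : 0 < fsize β := by
  cases β <;> simp [fsize]

/-- Size of a list of formulae. -/
def sz (Γ : List Formula) : ℕ := (Γ.map fsize).sum

lemma sz_perm {Γ Δ : List Formula} (h : Γ.Perm Δ) : sz Γ = sz Δ :=
  (h.map fsize).sum_eq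

lemma eval_big (ν : ℕ → Bool) : ∀ Γ : List Formula,
    eval ν (big Γ) = Γ.any (fun β => eval ν β)
  | [] => rfl
  | β :: Γ => by simp [big, eval, eval_big ν Γ]

/-- Derivability is invariant under permutations of a disjunction list. -/
lemma dperm {Γ Δ : List Formula} (h : Γ.Perm Δ) :
    Derives KSRules (big Γ) (big Δ) := by
  induction h with
  | nil => exact .refl
  | cons x _ ih => exact derives_or_right x ih
  | swap x y l =>
      exact (keq (.eqOrAssocR y x (big l))).trans
        ((derives_or_left (keq (.eqOrComm y x)) _).trans
          (keq (.eqOrAssocL x y (big l))))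
  | trans _ _ ih1 ih2 => exact ih1.trans ih2

/-- In a valid list of atoms there is a complementary pair. -/
lemma exists_compl {Γ : List Formula}
    (hA : ∀ β ∈ Γ, ∃ n b, β = Formula.atom n b)
    (hval : ∀ ν, eval ν (big Γ) = true) :
    ∃ n b, Formula.atom n b ∈ Γ ∧ Formula.atom n (!b) ∈ Γ := by
  by_contra hc
  push_neg at hc
  set ν : ℕ → Bool := fun n => !(decide (Formula.atom n true ∈ Γ)) with hν
  have h := hval ν
  rw [eval_big, List.any_eq_true] at h
  obtain ⟨β, hβ, he⟩ := h
  obtain ⟨n, b, rfl⟩ := hA β hβ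
  cases b with
  | true =>
      have hn : ν n = false := by simp [hν, hβ]
      simp [eval, hn] at he
  | false =>
      have hnt : Formula.atom n true ∉ Γ := by
        intro hmem
        have h' := hc n true hmem
        simp only [Bool.not_true] at h'
        exact h' hβ
      have hn : ν n = true := by simp [hν, hnt]
      simp [eval, hn] at he

/-- Completeness of KS for valid disjunction lists. -/
lemma complete_aux : ∀ N : ℕ, ∀ Γ : List Formula, sz Γ ≤ N →
    (∀ ν, eval ν (big Γ) = true) → Derives KSRules .tt (big Γ) := by
  intro N
  induction N with
  | zero =>
      intro Γ hsz hval
      cases Γ with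
      | nil => exact absurd (hval fun _ => true) (by simp [big, eval])
      | cons x Γ =>
          exfalso
          have := fsize_pos x
          simp [sz] at hsz
          omega
  | succ N ih =>
      intro Γ hsz hval
      by_cases hA : ∀ β ∈ Γ, ∃ n b, β = Formula.atom n b
      · -- all atoms: find a complementary pair
        obtain ⟨n, b, h1, h2⟩ := exists_compl hA hval
        have hne : (Formula.atom n (!b)) ≠ (Formula.atom n b) := by simp
        have h2' : Formula.atom n (!b) ∈ Γ.erase (Formula.atom n b) :=
          (List.mem_erase_of_ne hne).mpr h2
        set Δ := (Γ.erase (Formula.atom n b)).erase (Formula.atom n (!b)) with hΔ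
        have hperm : Γ.Perm (Formula.atom n b :: Formula.atom n (!b) :: Δ) :=
          (List.perm_cons_erase h1).trans
            (List.Perm.cons _ (List.perm_cons_erase h2'))
        have d1 : Derives KSRules .tt (.or (.atom n b) (.atom n (!b))) :=
          kstep ks_ai (.aiDown n b)
        have d2 : Derives KSRules (.or (.atom n b) (.atom n (!b)))
            (big (Formula.atom n b :: Formula.atom n (!b) :: Δ)) :=
          derives_or_right _ (orIntro _ _)
        exact d1.trans (d2.trans (dperm hperm.symm))
      · push_neg at hA
        obtain ⟨x, hx, hxA⟩ := hA
        set Δ := Γ.erase x with hΔ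
        have hperm : Γ.Perm (x :: Δ) := List.perm_cons_erase hx
        have hsz' : sz (x :: Δ) ≤ N + 1 := (sz_perm hperm).symm.le.trans hsz
        have hval' : ∀ ν, eval ν (big (x :: Δ)) = true :=
          fun ν => derives_sound (dperm hperm) (hval ν)
        have hfin : Derives KSRules .tt (big (x :: Δ)) → Derives KSRules .tt (big Γ) :=
          fun d => d.trans (dperm hperm.symm)
        clear hval hsz hΔ
        cases x with
        | atom n b => exact (hxA n b rfl).elim
        | tt => exact hfin (orIntro _ _)
        | ff =>
            have hszΔ : sz Δ ≤ N := by
              simp [sz, fsize] at hsz' ⊢; omega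
            have hvΔ : ∀ ν, eval ν (big Δ) = true := by
              intro ν
              have := hval' ν
              simpa [big, eval] using this
            exact hfin ((ih Δ hszΔ hvΔ).trans (orIntroR _ _))
        | or β γ =>
            have hszΔ : sz (β :: γ :: Δ) ≤ N := by
              simp [sz, fsize] at hsz' ⊢; omega
            have hvΔ : ∀ ν, eval ν (big (β :: γ :: Δ)) = true := by
              intro ν
              have := hval' ν
              simp [big, eval, Bool.or_eq_true] at this ⊢
              tauto
            exact hfin ((ih _ hszΔ hvΔ).trans
              (keq (.eqOrAssocR β γ (big Δ))))
        | and β γ =>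
            have hszβ : sz (β :: Δ) ≤ N := by
              have := fsize_pos γ
              simp [sz, fsize] at hsz' ⊢; omega
            have hszγ : sz (γ :: Δ) ≤ N := by
              have := fsize_pos β
              simp [sz, fsize] at hsz' ⊢; omega
            have hvβ : ∀ ν, eval ν (big (β :: Δ)) = true := by
              intro ν
              have := hval' ν
              simp [big, eval, Bool.or_eq_true, Bool.and_eq_true] at this ⊢
              tauto
            have hvγ : ∀ ν, eval ν (big (γ :: Δ)) = true := by
              intro ν
              have := hval' ν
              simp [big, eval, Bool.or_eq_true, Bool.and_eq_true] at this ⊢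
              tauto
            have hβd : Derives KSRules .tt (.or β (big Δ)) := ih _ hszβ hvβ
            have hγd : Derives KSRules .tt (.or γ (big Δ)) := ih _ hszγ hvγ
            set D := big Δ with hD
            have c1 : Derives KSRules .tt (.and .tt .tt) :=
              keq (.eqAndUnitAdd .tt)
            have c2 : Derives KSRules (.and .tt .tt)
                (.and (.or β D) (.or γ D)) :=
              (derives_and_left hβd .tt).trans (derives_and_right _ hγd)
            have c3 : Derives KSRules (.and (.or β D) (.or γ D))
                (.or (.and (.or β D) γ) D) :=
              kstep ks_s (.s (.or β D) γ D)
            have c4 : Derives KSRules (.or (.and (.or β D) γ) D)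
                (.or (.and γ (.or β D)) D) :=
              derives_or_left (keq (.eqAndComm (.or β D) γ)) D
            have c5 : Derives KSRules (.or (.and γ (.or β D)) D)
                (.or (.or (.and γ β) D) D) :=
              derives_or_left (kstep ks_s (.s γ β D)) D
            have c6 : Derives KSRules (.or (.or (.and γ β) D) D)
                (.or (.and γ β) (.or D D)) :=
              keq (.eqOrAssocL (.and γ β) D D)
            have c7 : Derives KSRules (.or (.and γ β) (.or D D))
                (.or (.and γ β) D) :=
              derives_or_right _ (con D)
            have c8 : Derives KSRules (.or (.and γ β) D)
                (.or (.and β γ) D) :=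
              derives_or_left (keq (.eqAndComm γ β)) D
            exact hfin (c1.trans (c2.trans (c3.trans (c4.trans
              (c5.trans (c6.trans (c7.trans c8)))))))

/-- For every SKS proof of `α` there exists a KS proof of
`α`. -/
theorem statement_3 (α : Formula) (h : Derives Set.univ Formula.tt α) :
    Derives KSRules Formula.tt α := by
  have hval : ∀ ν, eval ν α = true := fun ν => derives_sound h rfl
  have hd : Derives KSRules Formula.tt (big [α]) :=
    complete_aux (sz [α]) [α] le_rfl (fun ν => by simp [big, eval, hval ν])
  exact hd.trans (keq (.eqOrUnitDel α))

end AF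
end

section
/- For every SKS derivation Φ there exists an atomic flow A, unique up to isomorphism, together with a surjective map from the atom occurrences of Φ to the edges of A, such that: in every inference step, the atom occurrences of the surrounding context in the premiss are mapped to the same edges as the corresponding occurrences in the conclusion; each instance of a structural rule ai↓, ai↑, aw↓, aw↑, ac↓, ac↑ maps its active atom occurrences to the edges of a vertex of A carrying the corresponding label (the two disjuncts of an ai↓ instance to its two lower edges, the two conjuncts of an ai↑ instance to its two upper edges, the conclusion atom of aw↓ to its one lower edge, the premiss atom of aw↑ to its one upper edge, the two disjuncts and the contractum of ac↓ to its two upper edges and its one lower edge, and dually for ac↑); and each instance of s, m or = maps every atom occurrence of its premiss and the corresponding occurrence of its conclusion to the same edge. -/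
set_option linter.unusedVariables false

/-!
Every atom occurrence of a derivation is traced upwards, through the context of each step and
through the correspondence of atoms in `s`, `m` and `=` steps, to a unique *origin*: an atom of
the premiss, or an atom created by a structural step. Dually it is traced downwards to the
structural step consuming it, if there is one. The canonical flow has the structural steps as
vertices and the origins as edges, each edge hanging from the step creating it and entering the
step consuming it. In any associated flow an occurrence is mapped to the same edge as its origin,
and distinct origins to distinct edges (they differ in their upper vertex, or else live in one
formula); the endpoints of the edge of an occurrence are the images of its creating and
consuming steps. Hence mapping edges through origins gives an isomorphism between any two
associated flows.
-/

theorem Fin.exists_apply_le_apply_add_one {M : Type*} [AddCommMonoid M] [LinearOrder M]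
    [IsOrderedCancelAddMonoid M] {n : ℕ} (r : Fin (n + 1) → M) : ∃ i, r i ≤ r (i + 1) := by
  by_contra! h
  have hsum := Finset.sum_lt_sum_of_nonempty Finset.univ_nonempty (fun i _ => h i)
  rw [show ∑ i, r (i + 1) = ∑ i, r i from Equiv.sum_comp (Equiv.addRight 1) r] at hsum
  exact lt_irrefl _ hsum

theorem Set.comp_invFunOn_apply {α β γ : Type*} [Nonempty α] {φ : α → β} {ψ : α → γ}
    {s : Set α} (h : ∀ a ∈ s, ∀ b ∈ s, φ a = φ b → ψ a = ψ b) {a : α} (ha : a ∈ s) :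
    (ψ ∘ Function.invFunOn φ s) (φ a) = ψ a :=
  h _ (Function.invFunOn_mem ⟨a, ha, rfl⟩) a ha (Function.invFunOn_eq ⟨a, ha, rfl⟩)

theorem Set.bijOn_comp_invFunOn {α β γ : Type*} [Nonempty α] {φ : α → β} {ψ : α → γ}
    {s : Set α} (h : ∀ a ∈ s, ∀ b ∈ s, φ a = φ b ↔ ψ a = ψ b) :
    Set.BijOn (ψ ∘ Function.invFunOn φ s) (φ '' s) (ψ '' s) := by
  have h' := fun a ha b hb => (h a ha b hb).1
  refine ⟨?_, ?_, ?_⟩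
  · rintro _ ⟨a, ha, rfl⟩
    exact ⟨a, ha, (comp_invFunOn_apply h' ha).symm⟩
  · rintro _ ⟨a, ha, rfl⟩ _ ⟨b, hb, rfl⟩ hab
    rw [comp_invFunOn_apply h' ha, comp_invFunOn_apply h' hb] at hab
    exact (h a ha b hb).2 hab
  · rintro _ ⟨a, ha, rfl⟩
    exact ⟨φ a, ⟨a, ha, rfl⟩, comp_invFunOn_apply h' ha⟩

namespace AF

namespace Formula

theorem sub_append (φ : Formula) (q s : List Bool) :
    φ.sub (q ++ s) = (φ.sub q).bind (·.sub s) := by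
  induction q generalizing φ with
  | nil => simp [sub]
  | cons x q ih => cases φ <;> cases x <;> simp [sub, ih]

theorem sub_repl_append {φ γ : Formula} {q : List Bool} (h : φ.sub q = some γ)
    (δ : Formula) (s : List Bool) : (φ.repl q δ).sub (q ++ s) = δ.sub s := by
  induction q generalizing φ with
  | nil => simp [repl]
  | cons x q ih => cases φ <;> cases x <;> simp_all [sub, repl]

theorem sub_repl_eq_atom_iff {φ γ : Formula} {q p : List Bool} (h : φ.sub q = some γ)
    (δ : Formula) (hqp : ¬ q <+: p) (n : ℕ) (b : Bool) :
    (φ.repl q δ).sub p = some (.atom n b) ↔ φ.sub p = some (.atom n b) := by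
  induction q generalizing φ p with
  | nil => exact absurd p.nil_prefix hqp
  | cons x q ih =>
    rcases p with _ | ⟨y, p⟩
    · cases φ <;> cases x <;> simp_all [sub, repl]
    · cases φ <;> cases x <;> cases y <;> simp_all [sub, repl, List.cons_prefix_cons]

def occs : Formula → List (List Bool)
  | .tt | .ff => []
  | .atom _ _ => [[]]
  | .or α β | .and α β => α.occs.map (false :: ·) ++ β.occs.map (true :: ·)

theorem mem_occs {φ : Formula} {p : List Bool} : p ∈ φ.occs ↔ φ.IsOcc p := by
  induction φ generalizing p with
  | tt | ff | atom => rcases p with _ | ⟨_ | _, _⟩ <;> simp [occs, IsOcc, sub]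
  | or α β ihα ihβ | and α β ihα ihβ =>
    rcases p with _ | ⟨_ | _, p⟩ <;> simp [occs, IsOcc, sub, ihα, ihβ] at *

def polarityAt (φ : Formula) (p : List Bool) : Bool :=
  match φ.sub p with
  | some (.atom _ b) => b
  | _ => true

end Formula

section retrace

variable {α : Type*}

def FstPrefixFree (cs : List (List α × List α)) : Prop :=
  cs.Pairwise fun a b => ¬ a.1 <+: b.1 ∧ ¬ b.1 <+: a.1

theorem FstPrefixFree.eq_of_prefix {cs : List (List α × List α)} (h : FstPrefixFree cs)
    {c c' : List α × List α} {s : List α} (hc : c ∈ cs) (hc' : c' ∈ cs)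
    (hs : c.1 <+: s) (hs' : c'.1 <+: s) : c = c' := by
  by_contra hne
  have : Std.Symm fun (a b : List α × List α) => ¬ a.1 <+: b.1 ∧ ¬ b.1 <+: a.1 :=
    ⟨fun _ _ h => ⟨h.2, h.1⟩⟩
  obtain ⟨h₁, h₂⟩ := h.forall hc hc' hne
  rcases List.prefix_or_prefix_of_prefix hs hs' with h' | h'
  exacts [h₁ h', h₂ h']

/-- Transports the position `p` across an inference step at position `q` whose active atoms
correspond as prescribed by the pairs in `cs` (from first to second component). The result is
`none` when `p` is an active position not covered by `cs`. -/
def retrace [DecidableEq α] (cs : List (List α × List α)) (q p : List α) : Option (List α) :=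
  if q <+: p then
    (cs.find? fun c => c.1 <+: p.drop q.length).map
      fun c => q ++ c.2 ++ (p.drop q.length).drop c.1.length
  else some p

variable [DecidableEq α] {cs : List (List α × List α)} {q p x : List α}

theorem retrace_of_not_prefix (h : ¬ q <+: p) : retrace cs q p = some p := by
  simp [retrace, h]

theorem retrace_nil_of_prefix (h : q <+: p) : retrace [] q p = none := by
  simp [retrace, h]

theorem retrace_append (hcs : FstPrefixFree cs) {c : List α × List α} (hc : c ∈ cs)
    (t : List α) : retrace cs q (q ++ c.1 ++ t) = some (q ++ c.2 ++ t) := by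
  obtain ⟨c', hfind⟩ : ∃ c', cs.find? (fun d => d.1 <+: c.1 ++ t) = some c' :=
    Option.isSome_iff_exists.1 (List.find?_isSome.2 ⟨c, hc, by simp⟩)
  obtain rfl := hcs.eq_of_prefix (List.mem_of_find?_eq_some hfind) hc
    (by simpa using List.find?_some hfind) (List.prefix_append c.1 t)
  simp [retrace, hfind]

theorem retrace_eq_some (h : retrace cs q p = some x) :
    (¬ q <+: p ∧ x = p) ∨ ∃ c ∈ cs, ∃ t, p = q ++ c.1 ++ t ∧ x = q ++ c.2 ++ t := by
  unfold retrace at h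
  split_ifs at h with hq
  · obtain ⟨c, hfind, rfl⟩ := Option.map_eq_some_iff.1 h
    have hc : c.1 <+: p.drop q.length := by simpa using List.find?_some hfind
    refine Or.inr ⟨c, List.mem_of_find?_eq_some hfind, _, ?_, rfl⟩
    rw [List.append_assoc, List.prefix_iff_eq_append.1 hc, List.prefix_iff_eq_append.1 hq]
  · exact Or.inl ⟨hq, (Option.some_injective _ h).symm⟩

theorem retrace_swap (hcs : FstPrefixFree (cs.map Prod.swap)) (h : retrace cs q p = some x) :
    retrace (cs.map Prod.swap) q x = some p := by
  rcases retrace_eq_some h with ⟨hq, rfl⟩ | ⟨c, hc, t, rfl, rfl⟩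
  · exact retrace_of_not_prefix hq
  · exact retrace_append hcs (c := c.swap) (List.mem_map_of_mem hc) t

theorem retrace_injective (hcs : FstPrefixFree (cs.map Prod.swap)) {p' : List α}
    (h : retrace cs q p = some x) (h' : retrace cs q p' = some x) : p = p' :=
  Option.some_injective _ ((retrace_swap hcs h).symm.trans (retrace_swap hcs h'))

end retrace

namespace RuleName

/-- The pairs (position in the contractum, position in the redex) of corresponding atoms, as in
`stepCond`. -/
def corr : RuleName → List (List Bool × List Bool)
  | .s => [([false, false], [false]), ([false, true], [true, false]), ([true], [true, true])]
  | .m => [([false, false], [false, false]), ([true, false], [false, true]),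
      ([false, true], [true, false]), ([true, true], [true, true])]
  | .eqOrComm | .eqAndComm => [([false], [true]), ([true], [false])]
  | .eqOrAssocL | .eqAndAssocL =>
      [([false], [false, false]), ([true, false], [false, true]), ([true, true], [true])]
  | .eqOrAssocR | .eqAndAssocR =>
      [([false, false], [false]), ([false, true], [true, false]), ([true], [true, true])]
  | .eqOrUnitDel | .eqAndUnitDel => [([], [false])]
  | .eqOrUnitAdd | .eqAndUnitAdd => [([false], [])]
  | _ => []

def created : RuleName → List (List Bool)
  | .aiDown | .acUp => [[false], [true]]
  | .awDown | .acDown => [[]]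
  | _ => []

def consumed : RuleName → List (List Bool)
  | .aiUp | .acDown => [[false], [true]]
  | .awUp | .acUp => [[]]
  | _ => []

def label : RuleName → FlowLabel
  | .aiUp => .aiUp
  | .awDown => .awDown
  | .awUp => .awUp
  | .acDown => .acDown
  | .acUp => .acUp
  | _ => .aiDown

theorem corr_fstPrefixFree (r : RuleName) : FstPrefixFree r.corr := by
  cases r <;> unfold FstPrefixFree <;> decide

theorem corr_swap_fstPrefixFree (r : RuleName) : FstPrefixFree (r.corr.map Prod.swap) := by
  cases r <;> unfold FstPrefixFree <;> decide

theorem corr_eq_nil {r : RuleName} (h : r.isStructural) : r.corr = [] := by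
  cases r <;> simp_all [isStructural, corr]

theorem isStructural_of_mem_created {r : RuleName} {c : List Bool} (h : c ∈ r.created) :
    r.isStructural := by
  cases r <;> simp_all [isStructural, created]

theorem isStructural_of_mem_consumed {r : RuleName} {d : List Bool} (h : d ∈ r.consumed) :
    r.isStructural := by
  cases r <;> simp_all [isStructural, consumed]

theorem created_nodup (r : RuleName) : r.created.Nodup := by
  cases r <;> simp [created]

theorem consumed_nodup (r : RuleName) : r.consumed.Nodup := by
  cases r <;> simp [consumed]

theorem labDeg_label {r : RuleName} (h : r.isStructural) :
    labDeg r.label = (r.created.length, r.consumed.length) := by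
  cases r <;> simp_all [isStructural, label, labDeg, created, consumed]

theorem retrace_corr_swap {r : RuleName} {q p x : List Bool}
    (h : retrace r.corr q p = some x) : retrace (r.corr.map Prod.swap) q x = some p :=
  retrace_swap r.corr_swap_fstPrefixFree h

theorem retrace_corr_of_swap {r : RuleName} {q p x : List Bool}
    (h : retrace (r.corr.map Prod.swap) q p = some x) : retrace r.corr q x = some p := by
  simpa [List.map_map] using retrace_swap (cs := r.corr.map Prod.swap)
    (by simpa [List.map_map] using r.corr_fstPrefixFree) h

end RuleName

namespace RuleInstance

variable {r : RuleName} {γ δ : Formula} (h : RuleInstance r γ δ)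
include h

theorem occ_contractum {p : List Bool} {n : ℕ} {b : Bool} (hp : δ.sub p = some (.atom n b)) :
    (∃ c ∈ r.corr, ∃ t, p = c.1 ++ t ∧ γ.sub (c.2 ++ t) = some (.atom n b)) ∨
      p ∈ r.created := by
  cases h <;> rcases p with _ | ⟨_ | _, _ | ⟨_ | _, p⟩⟩ <;>
    simp_all [Formula.sub, RuleName.corr, RuleName.created]

theorem occ_redex {p : List Bool} {n : ℕ} {b : Bool} (hp : γ.sub p = some (.atom n b)) :
    (∃ c ∈ r.corr, ∃ t, p = c.2 ++ t ∧ δ.sub (c.1 ++ t) = some (.atom n b)) ∨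
      p ∈ r.consumed := by
  cases h <;> rcases p with _ | ⟨_ | _, _ | ⟨_ | _, p⟩⟩ <;>
    simp_all [Formula.sub, RuleName.corr, RuleName.consumed]

theorem isOcc_created {c : List Bool} (hc : c ∈ r.created) : δ.IsOcc c := by
  cases h <;> simp [RuleName.created] at hc <;> rcases hc with rfl | rfl <;>
    exact ⟨_, _, rfl⟩

theorem isOcc_consumed {d : List Bool} (hd : d ∈ r.consumed) : γ.IsOcc d := by
  cases h <;> simp [RuleName.consumed] at hd <;> rcases hd with rfl | rfl <;>
    exact ⟨_, _, rfl⟩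

theorem polarities :
    let L := r.created.map δ.polarityAt ++ r.consumed.map γ.polarityAt
    ((r.label = .acDown ∨ r.label = .acUp) → ∀ x ∈ L, ∀ y ∈ L, x = y) ∧
      ((r.label = .aiDown ∨ r.label = .aiUp) → r.isStructural → ∃ x ∈ L, ∃ y ∈ L, x ≠ y) := by
  cases h <;> simp [RuleName.label, RuleName.created, RuleName.consumed, RuleName.isStructural,
    Formula.polarityAt, Formula.sub]

end RuleInstance

namespace StepAt

variable {r : RuleName} {q p : List Bool} {φ ψ : Formula} (h : StepAt r q φ ψ)
include h

theorem isOcc_created {c : List Bool} (hc : c ∈ r.created) : ψ.IsOcc (q ++ c) := by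
  obtain ⟨γ, δ, hγ, hr, rfl⟩ := h
  obtain ⟨n, b, hc⟩ := hr.isOcc_created hc
  exact ⟨n, b, by rw [Formula.sub_repl_append hγ, hc]⟩

theorem isOcc_consumed {d : List Bool} (hd : d ∈ r.consumed) : φ.IsOcc (q ++ d) := by
  obtain ⟨γ, δ, hγ, hr, -⟩ := h
  obtain ⟨n, b, hd⟩ := hr.isOcc_consumed hd
  exact ⟨n, b, by rw [Formula.sub_append, hγ, Option.bind_some, hd]⟩

theorem concl_cases {n : ℕ} {b : Bool} (hp : ψ.sub p = some (.atom n b)) :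
    (∃ p', retrace r.corr q p = some p' ∧ φ.sub p' = some (.atom n b)) ∨
      (retrace r.corr q p = none ∧ r.isStructural ∧ ∃ c ∈ r.created, p = q ++ c) := by
  obtain ⟨γ, δ, hγ, hr, rfl⟩ := h
  by_cases hq : q <+: p
  · obtain ⟨s, rfl⟩ := hq
    rw [Formula.sub_repl_append hγ] at hp
    rcases hr.occ_contractum hp with ⟨c, hc, t, rfl, ht⟩ | hc
    · refine Or.inl ⟨q ++ c.2 ++ t, ?_, ?_⟩
      · rw [← List.append_assoc]
        exact retrace_append r.corr_fstPrefixFree hc t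
      · rw [List.append_assoc, Formula.sub_append, hγ, Option.bind_some, ht]
    · have hs := RuleName.isStructural_of_mem_created hc
      refine Or.inr ⟨?_, hs, s, hc, rfl⟩
      rw [RuleName.corr_eq_nil hs]
      exact retrace_nil_of_prefix (List.prefix_append q s)
  · exact Or.inl ⟨p, retrace_of_not_prefix hq,
      (Formula.sub_repl_eq_atom_iff hγ δ hq n b).1 hp⟩

theorem prem_cases {n : ℕ} {b : Bool} (hp : φ.sub p = some (.atom n b)) :
    (∃ p', retrace (r.corr.map Prod.swap) q p = some p' ∧ ψ.sub p' = some (.atom n b)) ∨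
      (retrace (r.corr.map Prod.swap) q p = none ∧ r.isStructural ∧
        ∃ d ∈ r.consumed, p = q ++ d) := by
  obtain ⟨γ, δ, hγ, hr, rfl⟩ := h
  by_cases hq : q <+: p
  · obtain ⟨s, rfl⟩ := hq
    rw [Formula.sub_append, hγ, Option.bind_some] at hp
    rcases hr.occ_redex hp with ⟨c, hc, t, rfl, ht⟩ | hd
    · refine Or.inl ⟨q ++ c.1 ++ t, ?_, ?_⟩
      · rw [← List.append_assoc]
        exact retrace_append r.corr_swap_fstPrefixFree (c := c.swap) (List.mem_map_of_mem hc) t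
      · rw [List.append_assoc, Formula.sub_repl_append hγ, ht]
    · have hs := RuleName.isStructural_of_mem_consumed hd
      refine Or.inr ⟨?_, hs, s, hd, rfl⟩
      rw [RuleName.corr_eq_nil hs, List.map_nil]
      exact retrace_nil_of_prefix (List.prefix_append q s)
  · exact Or.inl ⟨p, retrace_of_not_prefix hq,
      (Formula.sub_repl_eq_atom_iff hγ δ hq n b).2 hp⟩

end StepAt

namespace stepCond

variable {A : PreFlow} {f : ℕ → List Bool → ℕ} {v i : ℕ} {r : RuleName} {q : List Bool}
  {φ ψ : Formula}

theorem intro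
    (hctx : ∀ p, ¬ q <+: p → φ.IsOcc p → f (i + 1) p = f i p)
    (hcorr : ∀ c ∈ r.corr, ∀ t, ψ.IsOcc (q ++ c.1 ++ t) →
      f (i + 1) (q ++ c.1 ++ t) = f i (q ++ c.2 ++ t))
    (hη : r.isStructural → A.η v = r.label)
    (hup : ∀ c ∈ r.created, A.up (f (i + 1) (q ++ c)) = some v)
    (hlo : ∀ d ∈ r.consumed, A.lo (f i (q ++ d)) = some v)
    (hinj₁ : ∀ c ∈ r.created, ∀ c' ∈ r.created,
      f (i + 1) (q ++ c) = f (i + 1) (q ++ c') → c = c')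
    (hinj₀ : ∀ d ∈ r.consumed, ∀ d' ∈ r.consumed, f i (q ++ d) = f i (q ++ d') → d = d') :
    stepCond A f v i r q φ ψ := by
  refine ⟨hctx, ?_⟩
  clear hctx
  cases r <;> first
    | exact hcorr
    | trivial
    | (clear hcorr; simp_all [RuleName.created, RuleName.consumed, RuleName.label,
        RuleName.isStructural])

variable (h : stepCond A f v i r q φ ψ)
include h

theorem corr_eq {c : List Bool × List Bool} (hc : c ∈ r.corr) {t : List Bool}
    (ht : ψ.IsOcc (q ++ c.1 ++ t)) : f (i + 1) (q ++ c.1 ++ t) = f i (q ++ c.2 ++ t) := by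
  cases r <;> first | exact h.2 c hc t ht | simp [RuleName.corr] at hc

theorem up_created {c : List Bool} (hc : c ∈ r.created) :
    A.up (f (i + 1) (q ++ c)) = some v := by
  cases r <;> simp only [RuleName.created, List.mem_cons, List.not_mem_nil, or_false] at hc
  case aiDown => rcases hc with rfl | rfl; exacts [h.2.2.1, h.2.2.2.1]
  case awDown => subst hc; simpa using h.2.2
  case acDown => subst hc; simpa using h.2.2.2.2.1
  case acUp => rcases hc with rfl | rfl; exacts [h.2.2.2.1, h.2.2.2.2.1]

theorem lo_consumed {d : List Bool} (hd : d ∈ r.consumed) : A.lo (f i (q ++ d)) = some v := by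
  cases r <;> simp only [RuleName.consumed, List.mem_cons, List.not_mem_nil, or_false] at hd
  case aiUp => rcases hd with rfl | rfl; exacts [h.2.2.1, h.2.2.2.1]
  case awUp => subst hd; simpa using h.2.2
  case acDown => rcases hd with rfl | rfl; exacts [h.2.2.1, h.2.2.2.1]
  case acUp => subst hd; simpa using h.2.2.1

theorem eta_eq (hs : r.isStructural) : A.η v = r.label := by
  cases r <;> first | exact h.2.1 | simp [RuleName.isStructural] at hs

theorem apply_succ_eq_of_retrace {p x : List Bool} (hp : ψ.IsOcc p) (hx : φ.IsOcc x)
    (hpx : retrace r.corr q p = some x) : f (i + 1) p = f i x := by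
  rcases retrace_eq_some hpx with ⟨hq, rfl⟩ | ⟨c, hc, t, rfl, rfl⟩
  exacts [h.1 x hq hx, h.corr_eq hc hp]

end stepCond

/-- The step producing formula `c` of a derivation (`none` for the premiss). -/
def stepBefore : ℕ → Option ℕ
  | 0 => none
  | k + 1 => some k

theorem stepBefore_injective : Function.Injective stepBefore := by
  intro a b h
  cases a <;> cases b <;> simp_all [stepBefore]

namespace Deriv

variable (Φ : Deriv)

/-- The atom occurrence, as (formula index, position), from which the occurrence at `p` in
formula `i` descends: an atom of the premiss or one created by a structural step. -/
def origin : ℕ → List Bool → ℕ × List Bool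
  | 0, p => (0, p)
  | i + 1, p =>
    match retrace (Φ.stepAt i).1.corr (Φ.stepAt i).2.1 p with
    | some p' => origin i p'
    | none => (i + 1, p)

def birth (i : ℕ) (p : List Bool) : Option ℕ := stepBefore (Φ.origin i p).1

/-- The structural step consuming the atom occurrence at `p` in formula `i`, or `none` if it
survives to the conclusion. -/
def death (i : ℕ) (p : List Bool) : Option ℕ :=
  if i < Φ.steps.length then
    match retrace ((Φ.stepAt i).1.corr.map Prod.swap) (Φ.stepAt i).2.1 p with
    | some p' => death (i + 1) p'
    | none => some i
  else none
termination_by Φ.steps.length - i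

variable {Φ} {i : ℕ} {p : List Bool}

theorem origin_fst_le : (Φ.origin i p).1 ≤ i := by
  induction i generalizing p with
  | zero => rfl
  | succ i ih =>
    rw [origin]
    split
    · exact ih.trans i.le_succ
    · rfl

theorem origin_succ_of_retrace {x : List Bool}
    (h : retrace (Φ.stepAt i).1.corr (Φ.stepAt i).2.1 p = some x) :
    Φ.origin (i + 1) p = Φ.origin i x := by
  simp [origin, h]

theorem origin_succ_of_retrace_eq_none
    (h : retrace (Φ.stepAt i).1.corr (Φ.stepAt i).2.1 p = none) :
    Φ.origin (i + 1) p = (i + 1, p) := by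
  simp [origin, h]

theorem origin_created {k : ℕ} {c : List Bool} (hc : c ∈ (Φ.stepAt k).1.created) :
    Φ.origin (k + 1) ((Φ.stepAt k).2.1 ++ c) = (k + 1, (Φ.stepAt k).2.1 ++ c) := by
  apply origin_succ_of_retrace_eq_none
  rw [RuleName.corr_eq_nil (RuleName.isStructural_of_mem_created hc)]
  exact retrace_nil_of_prefix (List.prefix_append _ _)

theorem origin_injective {p' : List Bool} (h : Φ.origin i p = Φ.origin i p') : p = p' := by
  induction i generalizing p p' with
  | zero => simpa [origin] using h
  | succ i ih =>
    have hlt : ∀ {x y : List Bool}, Φ.origin i x ≠ (i + 1, y) := fun h =>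
      absurd (congrArg Prod.fst h ▸ Φ.origin_fst_le) (by omega)
    rcases hx : retrace (Φ.stepAt i).1.corr (Φ.stepAt i).2.1 p with _ | x <;>
      rcases hx' : retrace (Φ.stepAt i).1.corr (Φ.stepAt i).2.1 p' with _ | x'
    · rw [origin_succ_of_retrace_eq_none hx, origin_succ_of_retrace_eq_none hx'] at h
      exact (Prod.mk.inj h).2
    · rw [origin_succ_of_retrace_eq_none hx, origin_succ_of_retrace hx'] at h
      exact absurd h.symm hlt
    · rw [origin_succ_of_retrace hx, origin_succ_of_retrace_eq_none hx'] at h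
      exact absurd h hlt
    · rw [origin_succ_of_retrace hx, origin_succ_of_retrace hx'] at h
      exact retrace_injective (Φ.stepAt i).1.corr_swap_fstPrefixFree hx (ih h ▸ hx')

theorem origin_spec (hwf : Φ.WF) (hi : i < Φ.nf) {n : ℕ} {b : Bool}
    (hp : (Φ.fml i).sub p = some (.atom n b)) :
    (Φ.fml (Φ.origin i p).1).sub (Φ.origin i p).2 = some (.atom n b) ∧
      ∀ k, Φ.birth i p = some k → k < Φ.steps.length ∧ (Φ.stepAt k).1.isStructural ∧
        ∃ c ∈ (Φ.stepAt k).1.created, Φ.origin i p = (k + 1, (Φ.stepAt k).2.1 ++ c) := by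
  induction i generalizing p with
  | zero => exact ⟨hp, fun k hk => by simp [birth, origin, stepBefore] at hk⟩
  | succ i ih =>
    have hi' : i < Φ.steps.length := by simp only [nf] at hi; omega
    unfold birth
    rcases (hwf i hi').concl_cases hp with ⟨x, hx, hxs⟩ | ⟨hx, hs, c, hc, rfl⟩
    · rw [origin_succ_of_retrace hx]
      exact ih (by simp only [nf]; omega) hxs
    · rw [origin_succ_of_retrace_eq_none hx]
      refine ⟨hp, fun k hk => ?_⟩
      cases hk
      exact ⟨hi', hs, c, hc, rfl⟩

theorem birth_eq_none : Φ.birth i p = none ↔ (Φ.origin i p).1 = 0 := by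
  unfold birth
  cases (Φ.origin i p).1 <;> simp [stepBefore]

theorem birth_eq_some {k : ℕ} : Φ.birth i p = some k ↔ (Φ.origin i p).1 = k + 1 := by
  unfold birth
  cases (Φ.origin i p).1 <;> simp [stepBefore]

theorem death_of_le (h : Φ.steps.length ≤ i) : Φ.death i p = none := by
  rw [death, if_neg (by omega)]

theorem death_of_retrace (hi : i < Φ.steps.length) {x : List Bool}
    (h : retrace ((Φ.stepAt i).1.corr.map Prod.swap) (Φ.stepAt i).2.1 p = some x) :
    Φ.death i p = Φ.death (i + 1) x := by
  rw [death, if_pos hi, h]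

theorem death_of_retrace_eq_none (hi : i < Φ.steps.length)
    (h : retrace ((Φ.stepAt i).1.corr.map Prod.swap) (Φ.stepAt i).2.1 p = none) :
    Φ.death i p = some i := by
  rw [death, if_pos hi, h]

theorem death_consumed {k : ℕ} (hk : k < Φ.steps.length) {d : List Bool}
    (hd : d ∈ (Φ.stepAt k).1.consumed) : Φ.death k ((Φ.stepAt k).2.1 ++ d) = some k := by
  apply death_of_retrace_eq_none hk
  rw [RuleName.corr_eq_nil (RuleName.isStructural_of_mem_consumed hd), List.map_nil]
  exact retrace_nil_of_prefix (List.prefix_append _ _)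

theorem death_origin (hi : i < Φ.nf) :
    Φ.death (Φ.origin i p).1 (Φ.origin i p).2 = Φ.death i p := by
  induction i generalizing p with
  | zero => rfl
  | succ i ih =>
    have hi' : i < Φ.steps.length := by simp only [nf] at hi; omega
    rcases hx : retrace (Φ.stepAt i).1.corr (Φ.stepAt i).2.1 p with _ | x
    · rw [origin_succ_of_retrace_eq_none hx]
    · rw [origin_succ_of_retrace hx, ih (by simp only [nf]; omega),
        death_of_retrace hi' (RuleName.retrace_corr_swap hx)]

theorem death_spec (hwf : Φ.WF) (hi : i < Φ.nf) {n : ℕ} {b : Bool}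
    (hp : (Φ.fml i).sub p = some (.atom n b)) {k : ℕ} (hk : Φ.death i p = some k) :
    k < Φ.steps.length ∧ (Φ.stepAt k).1.isStructural ∧
      ∃ d ∈ (Φ.stepAt k).1.consumed, Φ.origin k ((Φ.stepAt k).2.1 ++ d) = Φ.origin i p := by
  fun_induction Φ.death i p with
  | case1 i p hi' x hx ih =>
    rcases (hwf i hi').prem_cases hp with ⟨x', hx', hxs⟩ | ⟨hx', -⟩
    · obtain rfl : x = x' := Option.some_injective _ (hx.symm.trans hx')
      rw [← origin_succ_of_retrace (RuleName.retrace_corr_of_swap hx)]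
      exact ih (by simp only [nf]; omega) hxs hk
    · simp [hx] at hx'
  | case2 i p hi' hx =>
    obtain rfl : i = k := Option.some_injective _ hk
    rcases (hwf i hi').prem_cases hp with ⟨x', hx', -⟩ | ⟨-, hs, d, hd, rfl⟩
    · simp [hx] at hx'
    · exact ⟨hi', hs, d, hd, rfl⟩
  | case3 => cases hk

variable (Φ) in
def structuralSteps : Set ℕ := {k | k < Φ.steps.length ∧ (Φ.stepAt k).1.isStructural}

variable (Φ) in
def occurrences : Set (ℕ × List Bool) := {o | o.1 < Φ.nf ∧ (Φ.fml o.1).IsOcc o.2}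

theorem birth_mem_structuralSteps (hwf : Φ.WF) (hi : i < Φ.nf) (hp : (Φ.fml i).IsOcc p)
    {k : ℕ} (hk : Φ.birth i p = some k) : k ∈ Φ.structuralSteps := by
  obtain ⟨n, b, hp⟩ := hp
  obtain ⟨hkl, hks, -⟩ := (origin_spec hwf hi hp).2 k hk
  exact ⟨hkl, hks⟩

theorem death_mem_structuralSteps (hwf : Φ.WF) (hi : i < Φ.nf) (hp : (Φ.fml i).IsOcc p)
    {k : ℕ} (hk : Φ.death i p = some k) : k ∈ Φ.structuralSteps := by
  obtain ⟨n, b, hp⟩ := hp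
  obtain ⟨hkl, hks, -⟩ := death_spec hwf hi hp hk
  exact ⟨hkl, hks⟩

variable (Φ)

/-- The edge of the canonical flow carrying an atom occurrence: its origin, encoded as a
natural number. -/
def edgeOf (i : ℕ) (p : List Bool) : ℕ := Encodable.encode (Φ.origin i p)

def flowOf : PreFlow where
  V := (Finset.range Φ.steps.length).filter fun k => (Φ.stepAt k).1.isStructural
  E := ((List.range Φ.nf).flatMap fun i => (Φ.fml i).occs.map (Φ.edgeOf i)).toFinset
  η k := (Φ.stepAt k).1.label
  up e := (Encodable.decode (α := ℕ × List Bool) e).bind fun o => stepBefore o.1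
  lo e := (Encodable.decode (α := ℕ × List Bool) e).bind fun o => Φ.death o.1 o.2

def polarity (e : ℕ) : Bool :=
  ((Encodable.decode (α := ℕ × List Bool) e).map fun o => (Φ.fml o.1).polarityAt o.2).getD true

variable {Φ}

theorem edgeOf_injective : Function.Injective (Φ.edgeOf i) :=
  fun _ _ h => origin_injective (Encodable.encode_injective h)

theorem mem_flowOf_E {e : ℕ} :
    e ∈ Φ.flowOf.E ↔ ∃ i < Φ.nf, ∃ p, (Φ.fml i).IsOcc p ∧ Φ.edgeOf i p = e := by
  simp [flowOf, Formula.mem_occs]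

theorem mem_flowOf_V {k : ℕ} :
    k ∈ Φ.flowOf.V ↔ k < Φ.steps.length ∧ (Φ.stepAt k).1.isStructural := by
  simp [flowOf]

theorem flowOf_up_edgeOf : Φ.flowOf.up (Φ.edgeOf i p) = Φ.birth i p := by
  simp only [flowOf, edgeOf, Encodable.encodek, Option.bind_some, birth]

theorem flowOf_lo_edgeOf (hi : i < Φ.nf) : Φ.flowOf.lo (Φ.edgeOf i p) = Φ.death i p := by
  simp only [flowOf, edgeOf, Encodable.encodek, Option.bind_some, death_origin hi]

theorem polarity_edgeOf (hwf : Φ.WF) (hi : i < Φ.nf) (hp : (Φ.fml i).IsOcc p) :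
    Φ.polarity (Φ.edgeOf i p) = (Φ.fml i).polarityAt p := by
  obtain ⟨n, b, hp⟩ := hp
  simp only [polarity, edgeOf, Encodable.encodek, Option.map_some, Option.getD_some,
    Formula.polarityAt, (origin_spec hwf hi hp).1, hp]

theorem flowOf_stepCond (hi : i < Φ.steps.length) :
    stepCond Φ.flowOf Φ.edgeOf i i (Φ.stepAt i).1 (Φ.stepAt i).2.1 (Φ.fml i)
      (Φ.fml (i + 1)) := by
  refine stepCond.intro (fun p hq _ => ?_) (fun c hc t _ => ?_) (fun _ => rfl)
    (fun c hc => ?_) (fun d hd => ?_) (fun c _ c' _ h => ?_) (fun d _ d' _ h => ?_)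
  · rw [edgeOf, edgeOf, origin_succ_of_retrace (retrace_of_not_prefix hq)]
  · rw [edgeOf, edgeOf,
      origin_succ_of_retrace (retrace_append (RuleName.corr_fstPrefixFree _) hc t)]
  · rw [flowOf_up_edgeOf, birth_eq_some, origin_created hc]
  · rw [flowOf_lo_edgeOf (by simp [nf]; omega), death_consumed hi hd]
  · exact List.append_cancel_left (edgeOf_injective h)
  · exact List.append_cancel_left (edgeOf_injective h)

section flowOf

variable (hwf : Φ.WF)
include hwf

theorem flowOf_Ledges {v : ℕ} (hv : v < Φ.steps.length) :
    Φ.flowOf.Ledges v = ((Φ.stepAt v).1.created.map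
      fun c => Φ.edgeOf (v + 1) ((Φ.stepAt v).2.1 ++ c)).toFinset := by
  ext e
  simp only [PreFlow.Ledges, Finset.mem_filter, List.mem_toFinset, List.mem_map]
  constructor
  · rintro ⟨he, hup⟩
    obtain ⟨i, hi, p, ⟨n, b, hp⟩, rfl⟩ := mem_flowOf_E.1 he
    rw [flowOf_up_edgeOf] at hup
    obtain ⟨-, -, c, hc, ho⟩ := (origin_spec hwf hi hp).2 v hup
    exact ⟨c, hc, by rw [edgeOf, edgeOf, ho, origin_created hc]⟩
  · rintro ⟨c, hc, rfl⟩
    refine ⟨mem_flowOf_E.2 ⟨v + 1, by simp [nf, hv], _, (hwf v hv).isOcc_created hc, rfl⟩,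
      ?_⟩
    rw [flowOf_up_edgeOf, birth_eq_some, origin_created hc]

theorem flowOf_Uedges {v : ℕ} (hv : v < Φ.steps.length) :
    Φ.flowOf.Uedges v = ((Φ.stepAt v).1.consumed.map
      fun d => Φ.edgeOf v ((Φ.stepAt v).2.1 ++ d)).toFinset := by
  ext e
  simp only [PreFlow.Uedges, Finset.mem_filter, List.mem_toFinset, List.mem_map]
  constructor
  · rintro ⟨he, hlo⟩
    obtain ⟨i, hi, p, ⟨n, b, hp⟩, rfl⟩ := mem_flowOf_E.1 he
    rw [flowOf_lo_edgeOf hi] at hlo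
    obtain ⟨-, -, d, hd, ho⟩ := death_spec hwf hi hp hlo
    exact ⟨d, hd, by rw [edgeOf, edgeOf, ho]⟩
  · rintro ⟨d, hd, rfl⟩
    have hv' : v < Φ.nf := by simp [nf]; omega
    exact ⟨mem_flowOf_E.2 ⟨v, hv', _, (hwf v hv).isOcc_consumed hd, rfl⟩,
      by rw [flowOf_lo_edgeOf hv', death_consumed hv hd]⟩

theorem flowOf_degOK : Φ.flowOf.degOK := by
  intro v hv
  obtain ⟨hv, hs⟩ := mem_flowOf_V.1 hv
  have hinj : ∀ i, Function.Injective fun s => Φ.edgeOf i ((Φ.stepAt v).2.1 ++ s) :=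
    fun i _ _ h => List.append_cancel_left (edgeOf_injective h)
  rw [flowOf_Ledges hwf hv, flowOf_Uedges hwf hv,
    List.toFinset_card_of_nodup ((RuleName.created_nodup _).map (hinj _)),
    List.toFinset_card_of_nodup ((RuleName.consumed_nodup _).map (hinj _))]
  simp [flowOf, RuleName.labDeg_label hs]

theorem flowOf_endpointsOK : Φ.flowOf.endpointsOK := by
  intro e he
  obtain ⟨i, hi, p, hp, rfl⟩ := mem_flowOf_E.1 he
  refine ⟨fun v hv => ?_, fun v hv => ?_⟩
  · rw [flowOf_up_edgeOf] at hv
    exact mem_flowOf_V.2 (birth_mem_structuralSteps hwf hi hp hv)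
  · rw [flowOf_lo_edgeOf hi] at hv
    exact mem_flowOf_V.2 (death_mem_structuralSteps hwf hi hp hv)

/-- Through a vertex `k` the formula index of the origin drops from `k + 1` (edges created at `k`)
to at most `k` (edges consumed at `k`), which rules out cycles. -/
theorem flowOf_acyclic : Φ.flowOf.Acyclic := by
  rintro ⟨h, ε, hε, hcyc⟩
  let rank : ℕ → ℕ := fun e =>
    ((Encodable.decode (α := ℕ × List Bool) e).map Prod.fst).getD 0
  have rank_edgeOf : ∀ i p, rank (Φ.edgeOf i p) = (Φ.origin i p).1 := by
    simp only [rank, edgeOf, Encodable.encodek, Option.map_some, Option.getD_some,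
      implies_true]
  obtain ⟨j, hj⟩ := Fin.exists_apply_le_apply_add_one (rank ∘ ε)
  obtain ⟨hsome, hupl⟩ := hcyc j
  obtain ⟨k, hk⟩ := Option.isSome_iff_exists.1 hsome
  obtain ⟨i, -, p, -, hij⟩ := mem_flowOf_E.1 (hε j)
  obtain ⟨i', hi', p', ⟨n, b, hp'⟩, hij'⟩ := mem_flowOf_E.1 (hε (j + 1))
  rw [hk, ← hij', flowOf_lo_edgeOf hi'] at hupl
  rw [← hij, flowOf_up_edgeOf, birth_eq_some] at hk
  obtain ⟨-, -, d, -, ho⟩ := death_spec hwf hi' hp' hupl.symm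
  have := ho ▸ origin_fst_le (Φ := Φ) (i := k) (p := (Φ.stepAt k).2.1 ++ d)
  simp only [Function.comp, ← hij, ← hij', rank_edgeOf] at hj
  omega

theorem flowOf_polarityOK : Φ.flowOf.PolarityOK Φ.polarity := by
  intro v hv
  obtain ⟨hv, hs⟩ := mem_flowOf_V.1 hv
  obtain ⟨γ, δ, hγ, hr, hψ⟩ := hwf v hv
  set L := (Φ.stepAt v).1.created.map δ.polarityAt ++
    (Φ.stepAt v).1.consumed.map γ.polarityAt
  have hpol_created : ∀ c ∈ (Φ.stepAt v).1.created,
      Φ.polarity (Φ.edgeOf (v + 1) ((Φ.stepAt v).2.1 ++ c)) = δ.polarityAt c := fun c hc => by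
    rw [polarity_edgeOf hwf (by simp [nf]; omega) ((hwf v hv).isOcc_created hc), hψ,
      Formula.polarityAt, Formula.sub_repl_append hγ]
    rfl
  have hpol_consumed : ∀ d ∈ (Φ.stepAt v).1.consumed,
      Φ.polarity (Φ.edgeOf v ((Φ.stepAt v).2.1 ++ d)) = γ.polarityAt d := fun d hd => by
    rw [polarity_edgeOf hwf (by simp [nf]; omega) ((hwf v hv).isOcc_consumed hd),
      Formula.polarityAt, Formula.sub_append, hγ, Option.bind_some]
    rfl
  have hedges : ∀ x, (∃ e ∈ Φ.flowOf.edges v, Φ.polarity e = x) ↔ x ∈ L := by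
    intro x
    simp only [PreFlow.edges, Finset.mem_union, flowOf_Ledges hwf hv, flowOf_Uedges hwf hv,
      List.mem_toFinset, List.mem_map, L, List.mem_append]
    constructor
    · rintro ⟨e, he, rfl⟩
      rcases he with ⟨c, hc, rfl⟩ | ⟨d, hd, rfl⟩
      exacts [Or.inl ⟨c, hc, (hpol_created c hc).symm⟩,
        Or.inr ⟨d, hd, (hpol_consumed d hd).symm⟩]
    · rintro (⟨c, hc, rfl⟩ | ⟨d, hd, rfl⟩)
      exacts [⟨_, Or.inl ⟨c, hc, rfl⟩, hpol_created c hc⟩,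
        ⟨_, Or.inr ⟨d, hd, rfl⟩, hpol_consumed d hd⟩]
  obtain ⟨hac, hai⟩ := hr.polarities
  refine ⟨fun hl e₁ he₁ e₂ he₂ =>
    hac hl _ ((hedges _).1 ⟨e₁, he₁, rfl⟩) _ ((hedges _).1 ⟨e₂, he₂, rfl⟩), fun hl => ?_⟩
  obtain ⟨x, hx, y, hy, hxy⟩ := hai hl hs
  obtain ⟨e₁, he₁, rfl⟩ := (hedges x).2 hx
  obtain ⟨e₂, he₂, rfl⟩ := (hedges y).2 hy
  exact ⟨e₁, he₁, e₂, he₂, hxy⟩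

theorem isAssocFlow_flowOf : IsAssocFlow Φ Φ.flowOf Φ.edgeOf id :=
  ⟨hwf,
    ⟨flowOf_degOK hwf, flowOf_endpointsOK hwf, flowOf_acyclic hwf, _, flowOf_polarityOK hwf⟩,
    fun i p hi hp => mem_flowOf_E.2 ⟨i, hi, p, hp, rfl⟩,
    fun e he => by
      obtain ⟨i, hi, p, hp, rfl⟩ := mem_flowOf_E.1 he
      exact ⟨i, p, hi, hp, rfl⟩,
    fun _ _ _ _ _ _ h => edgeOf_injective h,
    fun _ _ => flowOf_up_edgeOf,
    fun _ _ => (flowOf_lo_edgeOf (by simp [nf])).trans (death_of_le le_rfl),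
    fun _ hi hs => mem_flowOf_V.2 ⟨hi, hs⟩,
    fun v hv => ⟨v, (mem_flowOf_V.1 hv).1, (mem_flowOf_V.1 hv).2, rfl⟩,
    fun _ _ _ _ _ _ h => h,
    fun _ hi => flowOf_stepCond hi⟩

end flowOf

end Deriv
namespace IsAssocFlow

variable {Φ : Deriv} {A : PreFlow} {f : ℕ → List Bool → ℕ} {g : ℕ → ℕ}
  (H : IsAssocFlow Φ A f g)
include H

theorem apply_origin {i : ℕ} {p : List Bool} (hi : i < Φ.nf) (hp : (Φ.fml i).IsOcc p) :
    f i p = f (Φ.origin i p).1 (Φ.origin i p).2 := by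
  obtain ⟨hwf, -, -, -, -, -, -, -, -, -, hstep⟩ := H
  induction i generalizing p with
  | zero => rfl
  | succ i ih =>
    obtain ⟨n, b, hp⟩ := hp
    have hi' : i < Φ.steps.length := by simp only [Deriv.nf] at hi; omega
    rcases (hwf i hi').concl_cases hp with ⟨x, hx, hxs⟩ | ⟨hx, -⟩
    · rw [Deriv.origin_succ_of_retrace hx,
        (hstep i hi').apply_succ_eq_of_retrace ⟨n, b, hp⟩ ⟨n, b, hxs⟩ hx]
      exact ih (by simp only [Deriv.nf]; omega) ⟨n, b, hxs⟩
    · rw [Deriv.origin_succ_of_retrace_eq_none hx]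

theorem up_apply {i : ℕ} {p : List Bool} (hi : i < Φ.nf) (hp : (Φ.fml i).IsOcc p) :
    A.up (f i p) = (Φ.birth i p).map g := by
  rw [H.apply_origin hi hp]
  obtain ⟨hwf, -, -, -, -, hprem, -, -, -, -, hstep⟩ := H
  obtain ⟨n, b, hp⟩ := hp
  obtain ⟨ho, hborn⟩ := Deriv.origin_spec hwf hi hp
  rcases hb : Φ.birth i p with _ | k
  · have h0 := Deriv.birth_eq_none.1 hb
    rw [h0] at ho ⊢
    exact hprem _ ⟨n, b, ho⟩
  · obtain ⟨hk, -, c, hc, ho⟩ := hborn k hb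
    rw [ho]
    exact (hstep k hk).up_created hc

theorem lo_apply {i : ℕ} {p : List Bool} (hi : i < Φ.nf) (hp : (Φ.fml i).IsOcc p) :
    A.lo (f i p) = (Φ.death i p).map g := by
  obtain ⟨hwf, -, -, -, -, -, hconcl, -, -, -, hstep⟩ := H
  obtain ⟨n, b, hp⟩ := hp
  fun_induction Φ.death i p with
  | case1 i p hi' x hx ih =>
    rcases (hwf i hi').prem_cases hp with ⟨x', hx', hxs⟩ | ⟨hx', -⟩
    · obtain rfl : x = x' := Option.some_injective _ (hx.symm.trans hx')
      rw [← (hstep i hi').apply_succ_eq_of_retrace ⟨n, b, hxs⟩ ⟨n, b, hp⟩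
        (RuleName.retrace_corr_of_swap hx)]
      exact ih (by simp only [Deriv.nf]; omega) hxs
    · simp [hx] at hx'
  | case2 i p hi' hx =>
    rcases (hwf i hi').prem_cases hp with ⟨x', hx', -⟩ | ⟨-, -, d, hd, rfl⟩
    · simp [hx] at hx'
    · exact (hstep i hi').lo_consumed hd
  | case3 i p hi' =>
    obtain rfl : i = Φ.steps.length := by simp only [Deriv.nf] at hi; omega
    exact hconcl p ⟨n, b, hp⟩

theorem injOn : Set.InjOn g Φ.structuralSteps := by
  obtain ⟨-, -, -, -, -, -, -, -, -, hg, -⟩ := H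
  exact fun a ha b hb h => hg a b ha.1 hb.1 ha.2 hb.2 h

theorem eta_apply {k : ℕ} (hk : k ∈ Φ.structuralSteps) : A.η (g k) = (Φ.stepAt k).1.label := by
  obtain ⟨-, -, -, -, -, -, -, -, -, -, hstep⟩ := H
  exact (hstep k hk.1).eta_eq hk.2

theorem apply_eq_iff {i j : ℕ} {p p' : List Bool} (hi : i < Φ.nf) (hp : (Φ.fml i).IsOcc p)
    (hj : j < Φ.nf) (hp' : (Φ.fml j).IsOcc p') :
    f i p = f j p' ↔ Φ.origin i p = Φ.origin j p' := by
  refine ⟨fun h => ?_, fun h => by rw [H.apply_origin hi hp, H.apply_origin hj hp', h]⟩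
  have hb : Φ.birth i p = Φ.birth j p' := by
    have hup := congrArg A.up h
    rw [H.up_apply hi hp, H.up_apply hj hp'] at hup
    rcases hk : Φ.birth i p with _ | k <;> rcases hk' : Φ.birth j p' with _ | k' <;>
      simp only [hk, hk', Option.map_none, Option.map_some, reduceCtorEq,
        Option.some_inj] at hup ⊢
    exact H.injOn (Deriv.birth_mem_structuralSteps H.1 hi hp hk)
      (Deriv.birth_mem_structuralSteps H.1 hj hp' hk') hup
  have hfst : (Φ.origin i p).1 = (Φ.origin j p').1 := stepBefore_injective hb
  rw [H.apply_origin hi hp, H.apply_origin hj hp', hfst] at h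
  obtain ⟨hwf, -, -, -, hinj, -⟩ := H
  obtain ⟨n, b, hp⟩ := hp
  obtain ⟨n', b', hp'⟩ := hp'
  have ho := (Deriv.origin_spec hwf hi hp).1
  rw [hfst] at ho
  exact Prod.ext hfst (hinj _ _ _ (Deriv.origin_fst_le.trans_lt hj) ⟨n, b, ho⟩
    ⟨n', b', (Deriv.origin_spec hwf hj hp').1⟩ h)

theorem coe_V : (A.V : Set ℕ) = g '' Φ.structuralSteps := by
  obtain ⟨-, -, -, -, -, -, -, hV, hV', -, -⟩ := H
  ext v
  constructor
  · intro hv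
    obtain ⟨k, hk, hs, rfl⟩ := hV' v hv
    exact ⟨k, ⟨hk, hs⟩, rfl⟩
  · rintro ⟨k, ⟨hk, hs⟩, rfl⟩
    exact hV k hk hs

theorem coe_E : (A.E : Set ℕ) = Function.uncurry f '' Φ.occurrences := by
  obtain ⟨-, -, hE, hE', -⟩ := H
  ext e
  constructor
  · intro he
    obtain ⟨i, p, hi, hp, rfl⟩ := hE' e he
    exact ⟨(i, p), ⟨hi, hp⟩, rfl⟩
  · rintro ⟨⟨i, p⟩, ⟨hi, hp⟩, rfl⟩
    exact hE i p hi hp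

end IsAssocFlow

theorem IsAssocFlow.nonempty_flowIso {Φ : Deriv} {A A' : PreFlow} {f f' : ℕ → List Bool → ℕ}
    {g g' : ℕ → ℕ} (H : IsAssocFlow Φ A f g) (H' : IsAssocFlow Φ A' f' g') :
    Nonempty (FlowIso A A') := by
  have hS : ∀ a ∈ Φ.structuralSteps, ∀ b ∈ Φ.structuralSteps, g a = g b ↔ g' a = g' b :=
    fun a ha b hb => ⟨fun h => congrArg g' (H.injOn ha hb h),
      fun h => congrArg g (H'.injOn ha hb h)⟩
  have hO : ∀ a ∈ Φ.occurrences, ∀ b ∈ Φ.occurrences,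
      Function.uncurry f a = Function.uncurry f b ↔
        Function.uncurry f' a = Function.uncurry f' b :=
    fun a ha b hb => (H.apply_eq_iff ha.1 ha.2 hb.1 hb.2).trans
      (H'.apply_eq_iff ha.1 ha.2 hb.1 hb.2).symm
  set vmap := g' ∘ Function.invFunOn g Φ.structuralSteps
  have hvmap : ∀ k ∈ Φ.structuralSteps, vmap (g k) = g' k := fun _ =>
    Set.comp_invFunOn_apply fun a ha b hb => (hS a ha b hb).1
  have hmap : ∀ o : Option ℕ, (∀ k, o = some k → k ∈ Φ.structuralSteps) →
      o.map g' = (o.map g).map vmap := fun o ho => by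
    rw [Option.map_map]
    exact Option.map_congr fun k hk => (hvmap k (ho k hk)).symm
  set emap := Function.uncurry f' ∘ Function.invFunOn (Function.uncurry f) Φ.occurrences
  have hemap : ∀ o ∈ Φ.occurrences, emap (Function.uncurry f o) = Function.uncurry f' o :=
    fun _ => Set.comp_invFunOn_apply fun a ha b hb => (hO a ha b hb).1
  refine ⟨⟨vmap, emap, ?_, ?_, ?_, ?_, ?_⟩⟩
  · rw [H.coe_V, H'.coe_V]
    exact Set.bijOn_comp_invFunOn hS
  · rw [H.coe_E, H'.coe_E]
    exact Set.bijOn_comp_invFunOn hO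
  · intro v hv
    obtain ⟨k, hk, rfl⟩ : v ∈ g '' Φ.structuralSteps := H.coe_V ▸ hv
    rw [hvmap k hk, H'.eta_apply hk, H.eta_apply hk]
  · intro e he
    obtain ⟨⟨i, p⟩, ⟨hi, hp⟩, rfl⟩ : e ∈ Function.uncurry f '' Φ.occurrences := H.coe_E ▸ he
    rw [hemap _ ⟨hi, hp⟩, Function.uncurry_apply_pair, Function.uncurry_apply_pair,
      H'.up_apply hi hp, H.up_apply hi hp]
    exact hmap _ fun k => Deriv.birth_mem_structuralSteps H.1 hi hp
  · intro e he
    obtain ⟨⟨i, p⟩, ⟨hi, hp⟩, rfl⟩ : e ∈ Function.uncurry f '' Φ.occurrences := H.coe_E ▸ he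
    rw [hemap _ ⟨hi, hp⟩, Function.uncurry_apply_pair, Function.uncurry_apply_pair,
      H'.lo_apply hi hp, H.lo_apply hi hp]
    exact hmap _ fun k => Deriv.death_mem_structuralSteps H.1 hi hp

/-- For every SKS derivation `Φ` there exists an atomic
flow `A`, together with a (surjective) tracing map from the atom occurrences
of `Φ` onto the edges of `A` satisfying the association conditions, and `A`
is unique up to isomorphism. -/
theorem statement_5 (Φ : Deriv) (hΦ : Φ.WF) :
    (∃ (A : PreFlow) (f : ℕ → List Bool → ℕ) (g : ℕ → ℕ),
      IsAssocFlow Φ A f g) ∧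
    (∀ (A A' : PreFlow) (f f' : ℕ → List Bool → ℕ) (g g' : ℕ → ℕ),
      IsAssocFlow Φ A f g → IsAssocFlow Φ A' f' g' →
      Nonempty (FlowIso A A')) :=
  ⟨⟨Φ.flowOf, Φ.edgeOf, id, Deriv.isAssocFlow_flowOf hΦ⟩,
    fun _ _ _ _ _ _ H H' => H.nonempty_flowIso H'⟩

end AF
end
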